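/- arXiv:2103.09751 — 4 statements merged into one kernel-verified Lean document; each statement's English description precedes it below -/
import Mathlib

section
/- Let K, L ∈ 𝒦ⁿ, let i be an integer with 0 ≤ i < n, and let p ≥ 1 be a real number. Then A_{−p,i}(K,L)^{n−i} ≥ A_i(K)^{n−i+p} · A_i(L)^{−p}, with equality if and only if K and L have similar width. -/
open MeasureTheory Metric Filter Set
open scoped RealInnerProductSpace ENNReal NNReal Pointwise

noncomputable section

abbrev Euc (n : ℕ) := EuclideanSpace ℝ (Fin n)

/-- Support function `h(K,x) = sup {⟨x,y⟩ : y ∈ K}`. -/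
def suppFn {n : ℕ} (K : Set (Euc n)) (x : Euc n) : ℝ :=
  sSup ((fun y => ⟪x, y⟫) '' K)

/-- Half width of `K` in direction `u`: `b(K,u) = (h(K,u)+h(K,-u))/2`. -/
def halfWidth {n : ℕ} (K : Set (Euc n)) (u : Euc n) : ℝ :=
  (suppFn K u + suppFn K (-u)) / 2

/-- A convex body containing the origin in its interior. -/
def IsConvexBody {n : ℕ} (K : Set (Euc n)) : Prop :=
  IsCompact K ∧ Convex ℝ K ∧ (0 : Euc n) ∈ interior K

section facts
variable {n : ℕ} {K : Set (Euc n)}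

lemma bddAbove_inner (hK : IsCompact K) (x : Euc n) :
    BddAbove ((fun y => ⟪x, y⟫) '' K) :=
  (hK.image (continuous_const.inner continuous_id)).bddAbove

lemma suppFn_le {R : ℝ} (hK : IsCompact K) (hR : K ⊆ closedBall 0 R) (hne : K.Nonempty)
    (x : Euc n) : suppFn K x ≤ R * ‖x‖ := by
  apply csSup_le (hne.image _)
  rintro _ ⟨y, hy, rfl⟩
  calc ⟪x, y⟫ ≤ ‖x‖ * ‖y‖ := real_inner_le_norm x y
    _ ≤ ‖x‖ * R := by
        have := mem_closedBall_zero_iff.1 (hR hy)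
        have : ‖y‖ ≤ R := this
        nlinarith [norm_nonneg x]
    _ = R * ‖x‖ := mul_comm _ _

lemma le_suppFn {ε : ℝ} (hK : IsCompact K) (hε : 0 < ε) (hball : closedBall 0 ε ⊆ K)
    {u : Euc n} (hu : ‖u‖ = 1) : ε ≤ suppFn K u := by
  have hmem : ε • u ∈ K := by
    apply hball
    simp [mem_closedBall_zero_iff, norm_smul, hu, abs_of_pos hε]
  have : ⟪u, ε • u⟫ = ε := by
    rw [real_inner_smul_right, real_inner_self_eq_norm_sq, hu]; ring
  calc ε = ⟪u, ε • u⟫ := this.symm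
    _ ≤ suppFn K u := le_csSup (bddAbove_inner hK u) ⟨ε • u, hmem, rfl⟩

lemma suppFn_sub_le {R : ℝ} (hK : IsCompact K) (hR : K ⊆ closedBall 0 R) (hne : K.Nonempty)
    (x z : Euc n) : suppFn K x ≤ suppFn K z + R * ‖x - z‖ := by
  apply csSup_le (hne.image _)
  rintro _ ⟨y, hy, rfl⟩
  have h1 : ⟪x, y⟫ = ⟪z, y⟫ + ⟪x - z, y⟫ := by rw [inner_sub_left]; ring
  have h2 : ⟪z, y⟫ ≤ suppFn K z := le_csSup (bddAbove_inner hK z) ⟨y, hy, rfl⟩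
  have h3 : ⟪x - z, y⟫ ≤ ‖x - z‖ * ‖y‖ := real_inner_le_norm _ _
  have h4 : ‖y‖ ≤ R := mem_closedBall_zero_iff.1 (hR hy)
  nlinarith [norm_nonneg (x - z)]

lemma continuous_suppFn {R : ℝ} (hK : IsCompact K) (hR : K ⊆ closedBall 0 R) (hRpos : 0 ≤ R)
    (hne : K.Nonempty) : Continuous (suppFn K) := by
  have : LipschitzWith R.toNNReal (suppFn K) := by
    apply LipschitzWith.of_dist_le_mul
    intro x z
    rw [Real.dist_eq, abs_sub_le_iff]
    constructor
    · have := suppFn_sub_le hK hR hne x z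
      rw [dist_eq_norm] at *
      simp only [Real.coe_toNNReal _ hRpos]
      linarith
    · have := suppFn_sub_le hK hR hne z x
      rw [dist_eq_norm] at *
      simp only [Real.coe_toNNReal _ hRpos]
      rw [← neg_sub z x, norm_neg]
      linarith
  exact this.continuous

lemma convexBody_bounds (hK : IsConvexBody K) :
    ∃ ε R : ℝ, 0 < ε ∧ 0 < R ∧ Continuous (halfWidth K) ∧
      (∀ u : Euc n, ‖u‖ = 1 → ε ≤ halfWidth K u ∧ halfWidth K u ≤ R) := by
  obtain ⟨hKc, _, hK0⟩ := hK
  have hne : K.Nonempty := ⟨0, interior_subset hK0⟩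
  obtain ⟨R₀, hR₀⟩ := hKc.isBounded.subset_closedBall 0
  set R := max R₀ 1 with hRdef
  have hRpos : (0:ℝ) < R := lt_of_lt_of_le one_pos (le_max_right _ _)
  have hR : K ⊆ closedBall 0 R := hR₀.trans (closedBall_subset_closedBall (le_max_left _ _))
  obtain ⟨δ, hδpos, hδ⟩ := Metric.mem_nhds_iff.1 (mem_interior_iff_mem_nhds.1 hK0)
  set ε := δ / 2 with hεdef
  have hεpos : 0 < ε := by positivity
  have hball : closedBall 0 ε ⊆ K :=
    (closedBall_subset_ball (by simp [hεdef]; linarith)).trans hδ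
  have hcont : Continuous (halfWidth K) := by
    have hc := continuous_suppFn hKc hR hRpos.le hne
    unfold halfWidth
    fun_prop
  refine ⟨ε, R, hεpos, hRpos, hcont, fun u hu => ?_⟩
  have hu' : ‖-u‖ = 1 := by simpa using hu
  have l1 := le_suppFn hKc hεpos hball hu
  have l2 := le_suppFn hKc hεpos hball hu'
  have u1 := suppFn_le hKc hR hne u
  have u2 := suppFn_le hKc hR hne (-u)
  rw [hu] at u1; rw [hu'] at u2
  unfold halfWidth
  constructor <;> [skip; skip] <;> · linarith

end facts


/-- Spherical Lebesgue measure on the unit sphere. -/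
def sphMeasure (n : ℕ) : Measure (sphere (0 : Euc n) 1) :=
  (volume : Measure (Euc n)).toSphere

lemma sphMeasure_finite (n : ℕ) : IsFiniteMeasure (sphMeasure n) := by
  unfold sphMeasure; infer_instance

lemma sphMeasure_univ_pos {n : ℕ} (hn : 2 ≤ n) : 0 < sphMeasure n univ := by
  rw [sphMeasure, Measure.toSphere_apply_univ]
  have h1 : (0:ℝ≥0∞) < Module.finrank ℝ (Euc n) := by
    simp [finrank_euclideanSpace_fin]
    omega
  exact ENNReal.mul_pos h1.ne' (measure_ball_pos _ _ one_pos).ne'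

lemma sphMeasure_isOpenPos (n : ℕ) (hn : 2 ≤ n) :
    (sphMeasure n).IsOpenPosMeasure := by
  constructor
  intro U hU hUne
  rw [sphMeasure, Measure.toSphere_apply' _ hU.measurableSet]
  have hdim : (Module.finrank ℝ (Euc n) : ℝ≥0∞) ≠ 0 := by
    simp [finrank_euclideanSpace_fin]; omega
  refine (ENNReal.mul_pos hdim ?_).ne'
  set ψ := homeomorphUnitSphereProd (Euc n)
  set Wr : Set (Ioi (0:ℝ)) := {r | r.1 < 1} with hWr
  have hWro : IsOpen Wr := isOpen_Iio.preimage continuous_subtype_val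
  set A : Set (Euc n) := Subtype.val '' (ψ ⁻¹' (U ×ˢ Wr)) with hA
  have hAopen : IsOpen A := by
    apply (isOpen_compl_singleton (x := (0 : Euc n))).isOpenEmbedding_subtypeVal.isOpenMap
    exact (hU.prod hWro).preimage ψ.continuous
  have hAne : A.Nonempty := by
    obtain ⟨u₀, hu₀⟩ := hUne
    have hx : ((2:ℝ)⁻¹ • (u₀ : Euc n)) ∈ ({0}ᶜ : Set (Euc n)) := by
      simp only [mem_compl_iff, mem_singleton_iff]
      intro h
      have := ne_of_mem_sphere u₀.2 (one_ne_zero)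
      exact this (by simpa [smul_eq_zero] using h)
    refine ⟨(2:ℝ)⁻¹ • (u₀ : Euc n), ⟨⟨_, hx⟩, ?_, rfl⟩⟩
    have hnorm : ‖(2:ℝ)⁻¹ • (u₀ : Euc n)‖ = 2⁻¹ := by
      rw [norm_smul]
      simp [mem_sphere_zero_iff_norm.1 u₀.2]
    constructor
    · show (ψ _).1 ∈ U
      have : ((ψ ⟨_, hx⟩).1 : Euc n) = (u₀ : Euc n) := by
        rw [homeomorphUnitSphereProd_apply_fst_coe, hnorm]
        rw [smul_smul]
        norm_num
      rwa [show (ψ ⟨_, hx⟩).1 = u₀ from Subtype.ext this]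
    · show ((ψ _).2 : ℝ) < 1
      rw [homeomorphUnitSphereProd_apply_snd_coe, hnorm]
      norm_num
  have hsub : A ⊆ Ioo (0:ℝ) 1 • (Subtype.val '' U) := by
    rintro _ ⟨y, hy, rfl⟩
    obtain ⟨hyU, hyr⟩ := hy
    have hrepr : (y : Euc n) = ((ψ y).2 : ℝ) • ((ψ y).1 : Euc n) := by
      conv_lhs => rw [← ψ.symm_apply_apply y]
      rw [homeomorphUnitSphereProd_symm_apply_coe]
    refine ⟨((ψ y).2 : ℝ), ⟨(ψ y).2.2, hyr⟩, ((ψ y).1 : Euc n), ⟨(ψ y).1, hyU, rfl⟩, hrepr.symm⟩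
  exact (calc (0:ℝ≥0∞) < volume A := hAopen.measure_pos volume hAne
    _ ≤ volume (Ioo (0:ℝ) 1 • (Subtype.val '' U)) := measure_mono hsub).ne'

lemma integrable_cont {n : ℕ} (μ : Measure (sphere (0:Euc n) 1)) [IsFiniteMeasure μ]
    (f : sphere (0:Euc n) 1 → ℝ) (hf : Continuous f) : Integrable f μ := by
  have hsupp : HasCompactSupport f :=
    IsCompact.of_isClosed_subset isCompact_univ (isClosed_tsupport f) (subset_univ _)
  exact hf.integrable_of_hasCompactSupport hsupp

-- ### algebra part
lemma log_eq_iff_pos {x y : ℝ} (hx : 0 < x) (hy : 0 < y) :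
    Real.log x = Real.log y ↔ x = y :=
  ⟨fun h => Real.log_injOn_pos (Set.mem_Ioi.2 hx) (Set.mem_Ioi.2 hy) h, fun h => h ▸ rfl⟩

lemma alg_key {m a c nn q pp : ℝ} (hm : 0 < m) (ha : 0 < a) (hc : 0 < c)
    (hn : 0 < nn) (hq : 0 < q) (hp : 0 < pp) :
    (((a / c) ^ ((q + pp) / q) ≤ m / c ↔
      (1 / nn * a) ^ (q + pp) * (1 / nn * c) ^ (-pp) ≤ (1 / nn * m) ^ q) ∧
    ((a / c) ^ ((q + pp) / q) = m / c ↔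
      (1 / nn * m) ^ q = (1 / nn * a) ^ (q + pp) * (1 / nn * c) ^ (-pp))) := by
  have hac : 0 < a / c := div_pos ha hc
  have hmc : 0 < m / c := div_pos hm hc
  have hL : 0 < (a / c) ^ ((q + pp) / q) := Real.rpow_pos_of_pos hac _
  have hA : 0 < (1 / nn * a) := by positivity
  have hM : 0 < (1 / nn * m) := by positivity
  have hC : 0 < (1 / nn * c) := by positivity
  have hRHS : 0 < (1 / nn * a) ^ (q + pp) * (1 / nn * c) ^ (-pp) := by positivity
  have hLHS : 0 < (1 / nn * m) ^ q := by positivity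
  have l1 : Real.log ((a / c) ^ ((q + pp) / q)) =
      (q + pp) / q * (Real.log a - Real.log c) := by
    rw [Real.log_rpow hac, Real.log_div ha.ne' hc.ne']
  have l2 : Real.log (m / c) = Real.log m - Real.log c := Real.log_div hm.ne' hc.ne'
  have lM : Real.log (1 / nn * m) = Real.log m - Real.log nn := by
    rw [one_div, inv_mul_eq_div, Real.log_div hm.ne' hn.ne']
  have lA : Real.log (1 / nn * a) = Real.log a - Real.log nn := by
    rw [one_div, inv_mul_eq_div, Real.log_div ha.ne' hn.ne']
  have lC : Real.log (1 / nn * c) = Real.log c - Real.log nn := by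
    rw [one_div, inv_mul_eq_div, Real.log_div hc.ne' hn.ne']
  have l3 : Real.log ((1 / nn * m) ^ q) = q * (Real.log m - Real.log nn) := by
    rw [Real.log_rpow hM, lM]
  have l4 : Real.log ((1 / nn * a) ^ (q + pp) * (1 / nn * c) ^ (-pp)) =
      (q + pp) * (Real.log a - Real.log nn) + (-pp) * (Real.log c - Real.log nn) := by
    rw [Real.log_mul (by positivity) (by positivity), Real.log_rpow hA, Real.log_rpow hC, lA, lC]
  set lm := Real.log m
  set la := Real.log a
  set lc := Real.log c
  set ln := Real.log nn
  have hqmul : q * ((q + pp) / q * (la - lc)) = (q + pp) * (la - lc) := by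
    field_simp
  have e : (q * (lm - lc) - (q + pp) * (la - lc)) =
      (q * (lm - ln) - ((q + pp) * (la - ln) + (-pp) * (lc - ln))) := by ring
  constructor
  · rw [← Real.log_le_log_iff hL hmc, ← Real.log_le_log_iff hRHS hLHS, l1, l2, l3, l4]
    constructor
    · intro h
      have h2 : q * ((q + pp) / q * (la - lc)) ≤ q * (lm - lc) :=
        mul_le_mul_of_nonneg_left h hq.le
      rw [hqmul] at h2
      linarith
    · intro h
      have h2 : (q + pp) * (la - lc) ≤ q * (lm - lc) := by linarith
      rw [← hqmul] at h2
      exact le_of_mul_le_mul_left h2 hq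
  · rw [← log_eq_iff_pos hL hmc, ← log_eq_iff_pos hLHS hRHS, l1, l2, l3, l4]
    constructor
    · intro h
      have h2 : q * ((q + pp) / q * (la - lc)) = q * (lm - lc) := by rw [h]
      rw [hqmul] at h2
      linarith
    · intro h
      have h2 : (q + pp) * (la - lc) = q * (lm - lc) := by linarith
      rw [← hqmul] at h2
      exact mul_left_cancel₀ hq.ne' h2


/-- Width integral `A_i(K) = (1/n) ∫_{S^{n-1}} b(K,u)^{n-i} dS(u)`. -/
def widthIntegral (n i : ℕ) (K : Set (Euc n)) : ℝ :=
  (1 / (n : ℝ)) * ∫ u : sphere (0 : Euc n) 1,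
    halfWidth K (u : Euc n) ^ ((n : ℝ) - i) ∂(sphMeasure n)

/-- `K` and `L` have similar width: `b(L,·) = λ b(K,·)` on the sphere for some `λ > 0`. -/
def SimilarWidth {n : ℕ} (K L : Set (Euc n)) : Prop :=
  ∃ lam : ℝ, 0 < lam ∧ ∀ u : Euc n, ‖u‖ = 1 → halfWidth L u = lam * halfWidth K u

/-- The class `Φ`: convex, strictly decreasing `φ : (0,∞) → (0,∞)` with
`φ(0⁺)=∞`, `φ(∞)=0`, `φ(1)=1`. -/
structure IsOrliczPhi (φ : ℝ → ℝ) : Prop where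
  convexOn : ConvexOn ℝ (Set.Ioi (0 : ℝ)) φ
  strictAntiOn : StrictAntiOn φ (Set.Ioi (0 : ℝ))
  pos : ∀ t : ℝ, 0 < t → 0 < φ t
  tendsto_zero : Filter.Tendsto φ (nhdsWithin 0 (Set.Ioi 0)) Filter.atTop
  tendsto_atTop : Filter.Tendsto φ Filter.atTop (nhds 0)
  one : φ 1 = 1

/-- `L_p`-mixed width integral `A_{-p,i}(K,L) = (1/n) ∫ b(K,u)^{n-i+p} b(L,u)^{-p} dS(u)`. -/
def lpMixedWidthIntegral (n i : ℕ) (p : ℝ) (K L : Set (Euc n)) : ℝ :=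
  (1 / (n : ℝ)) * ∫ u : sphere (0 : Euc n) 1,
    halfWidth K (u : Euc n) ^ ((n : ℝ) - i + p) * halfWidth L (u : Euc n) ^ (-p) ∂(sphMeasure n)

/-- `L_p` Minkowski inequality for mixed width integrals, with the equality
characterization. -/
theorem lpMixedWidthIntegral_pow_ge {n : ℕ} (hn : 2 ≤ n) (i : ℕ) (hi : i < n)
    (p : ℝ) (hp : 1 ≤ p)
    (K L : Set (Euc n)) (hK : IsConvexBody K) (hL : IsConvexBody L) :
    lpMixedWidthIntegral n i p K L ^ ((n : ℝ) - i) ≥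
      widthIntegral n i K ^ ((n : ℝ) - i + p) * widthIntegral n i L ^ (-p) ∧
    (lpMixedWidthIntegral n i p K L ^ ((n : ℝ) - i) =
        widthIntegral n i K ^ ((n : ℝ) - i + p) * widthIntegral n i L ^ (-p) ↔
      SimilarWidth K L) := by
  classical
  obtain ⟨εK, RK, hεK, hRK, hcK, hbKb⟩ := convexBody_bounds hK
  obtain ⟨εL, RL, hεL, hRL, hcL, hbLb⟩ := convexBody_bounds hL
  haveI : IsFiniteMeasure (sphMeasure n) := sphMeasure_finite n
  haveI : (sphMeasure n).IsOpenPosMeasure := sphMeasure_isOpenPos n hn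
  have hq0 : (0:ℝ) < (n:ℝ) - i := by
    have : (i:ℝ) < (n:ℝ) := by exact_mod_cast hi
    linarith
  set q : ℝ := (n:ℝ) - i with hqdef
  have hp0 : (0:ℝ) < p := lt_of_lt_of_le one_pos hp
  have hn0 : (0:ℝ) < n := by
    have : 0 < n := by omega
    exact_mod_cast this
  have hr1 : 1 < (q + p)/q := by
    rw [lt_div_iff₀ hq0]; linarith
  have hr0 : (0:ℝ) < (q + p)/q := lt_trans one_pos hr1
  have hqr : q * ((q + p)/q) = q + p := by field_simp
  -- function facts on the sphere
  have hsph : ∀ u : sphere (0:Euc n) 1, ‖(u:Euc n)‖ = 1 :=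
    fun u => mem_sphere_zero_iff_norm.1 u.2
  have hbKpos : ∀ u : sphere (0:Euc n) 1, 0 < halfWidth K (u:Euc n) :=
    fun u => lt_of_lt_of_le hεK (hbKb _ (hsph u)).1
  have hbLpos : ∀ u : sphere (0:Euc n) 1, 0 < halfWidth L (u:Euc n) :=
    fun u => lt_of_lt_of_le hεL (hbLb _ (hsph u)).1
  have hbKle : ∀ u : sphere (0:Euc n) 1, halfWidth K (u:Euc n) ≤ RK :=
    fun u => (hbKb _ (hsph u)).2
  have hbLle : ∀ u : sphere (0:Euc n) 1, halfWidth L (u:Euc n) ≤ RL :=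
    fun u => (hbLb _ (hsph u)).2
  have hbKcont : Continuous (fun u : sphere (0:Euc n) 1 => halfWidth K (u:Euc n)) :=
    hcK.comp continuous_subtype_val
  have hbLcont : Continuous (fun u : sphere (0:Euc n) 1 => halfWidth L (u:Euc n)) :=
    hcL.comp continuous_subtype_val
  -- the density and the measure ν
  set d : sphere (0:Euc n) 1 → ℝ≥0 := fun u => Real.toNNReal (halfWidth L (u:Euc n) ^ q)
    with hddef
  have hbLq_cont : Continuous (fun u : sphere (0:Euc n) 1 => halfWidth L (u:Euc n) ^ q) :=
    hbLcont.rpow_const (fun u => Or.inl (hbLpos u).ne')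
  have hdcont : Continuous d := continuous_real_toNNReal.comp hbLq_cont
  have hdmeas : Measurable d := hdcont.measurable
  have hdmeas' : Measurable (fun u => (d u : ℝ≥0∞)) := hdmeas.coe_nnreal_ennreal
  have hdne : ∀ u : sphere (0:Euc n) 1, (d u : ℝ≥0∞) ≠ 0 := by
    intro u
    simp only [hddef, ne_eq, ENNReal.coe_eq_zero]
    exact (Real.toNNReal_pos.2 (Real.rpow_pos_of_pos (hbLpos u) q)).ne'
  set ν := (sphMeasure n).withDensity (fun u => (d u : ℝ≥0∞)) with hνdef
  haveI hνfin : IsFiniteMeasure ν := by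
    apply isFiniteMeasure_withDensity
    have hlt : ∫⁻ u, (d u : ℝ≥0∞) ∂(sphMeasure n) < ⊤ := calc
      ∫⁻ u, (d u : ℝ≥0∞) ∂(sphMeasure n)
        ≤ ∫⁻ _u, ENNReal.ofReal (RL ^ q) ∂(sphMeasure n) := by
          apply lintegral_mono
          intro u
          rw [hddef]
          exact ENNReal.coe_le_coe.2 (Real.toNNReal_le_toNNReal
            (Real.rpow_le_rpow (hbLpos u).le (hbLle u) hq0.le))
      _ = ENNReal.ofReal (RL ^ q) * sphMeasure n univ := by rw [lintegral_const]
      _ < ⊤ := ENNReal.mul_lt_top ENNReal.ofReal_lt_top (measure_lt_top _ _)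
    exact hlt.ne
  have hν0 : ν ≠ 0 := by
    intro h0
    have h1 : ν univ = 0 := by rw [h0]; rfl
    rw [hνdef, withDensity_apply _ MeasurableSet.univ, Measure.restrict_univ] at h1
    have h2 : ENNReal.ofReal (εL ^ q) * sphMeasure n univ ≤ ∫⁻ u, (d u : ℝ≥0∞) ∂(sphMeasure n) := by
      rw [← lintegral_const]
      apply lintegral_mono
      intro u
      rw [hddef]
      exact ENNReal.coe_le_coe.2 (Real.toNNReal_le_toNNReal
        (Real.rpow_le_rpow hεL.le (hbLb _ (hsph u)).1 hq0.le))
    rw [h1] at h2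
    have h3 : ENNReal.ofReal (εL ^ q) * sphMeasure n univ ≠ 0 :=
      (ENNReal.mul_pos (by simp only [ne_eq, ENNReal.ofReal_eq_zero, not_le]; positivity)
        (sphMeasure_univ_pos hn).ne').ne'
    exact h3 (le_antisymm h2 zero_le)
  haveI : NeZero ν := ⟨hν0⟩
  -- conversion of integrals
  have hconv : ∀ h : sphere (0:Euc n) 1 → ℝ,
      ∫ u, h u ∂ν = ∫ u, halfWidth L (u:Euc n) ^ q * h u ∂(sphMeasure n) := by
    intro h
    rw [hνdef, integral_withDensity_eq_integral_smul hdmeas]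
    apply integral_congr_ae
    filter_upwards with u
    rw [NNReal.smul_def, Real.coe_toNNReal _ (Real.rpow_nonneg (hbLpos u).le q), smul_eq_mul]
  -- g
  set g : sphere (0:Euc n) 1 → ℝ :=
    fun u => (halfWidth K (u:Euc n) / halfWidth L (u:Euc n)) ^ q with hgdef
  have hratio_pos : ∀ u : sphere (0:Euc n) 1, 0 < halfWidth K (u:Euc n) / halfWidth L (u:Euc n) :=
    fun u => div_pos (hbKpos u) (hbLpos u)
  have hgpos : ∀ u : sphere (0:Euc n) 1, 0 < g u := fun u => Real.rpow_pos_of_pos (hratio_pos u) q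
  have hgcont : Continuous g :=
    (hbKcont.div hbLcont (fun u => (hbLpos u).ne')).rpow_const
      (fun u => Or.inl (hratio_pos u).ne')
  have hgrcont : Continuous (fun u => g u ^ ((q+p)/q)) :=
    hgcont.rpow_const (fun u => Or.inl (hgpos u).ne')
  -- pointwise computations
  have hpt1 : ∀ u : sphere (0:Euc n) 1,
      halfWidth L (u:Euc n) ^ q * g u = halfWidth K (u:Euc n) ^ q := by
    intro u
    simp only [hgdef]
    rw [Real.div_rpow (hbKpos u).le (hbLpos u).le, mul_comm,
      div_mul_cancel₀ _ (Real.rpow_pos_of_pos (hbLpos u) q).ne']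
  have hpt2 : ∀ u : sphere (0:Euc n) 1, halfWidth L (u:Euc n) ^ q * g u ^ ((q+p)/q)
      = halfWidth K (u:Euc n) ^ (q + p) * halfWidth L (u:Euc n) ^ (-p) := by
    intro u
    have h1 : g u ^ ((q+p)/q) = (halfWidth K (u:Euc n) / halfWidth L (u:Euc n)) ^ (q + p) := by
      simp only [hgdef]
      rw [← Real.rpow_mul (hratio_pos u).le, hqr]
    rw [h1, Real.div_rpow (hbKpos u).le (hbLpos u).le]
    have h2 : halfWidth L (u:Euc n) ^ (-p)
        = halfWidth L (u:Euc n) ^ q / halfWidth L (u:Euc n) ^ (q + p) := by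
      rw [← Real.rpow_sub (hbLpos u)]
      norm_num
    rw [h2]
    ring
  -- the three integrals
  set a := ∫ u, halfWidth K (u:Euc n) ^ q ∂(sphMeasure n) with hadef
  set c := ∫ u, halfWidth L (u:Euc n) ^ q ∂(sphMeasure n) with hcdef
  set m := ∫ u, halfWidth K (u:Euc n) ^ (q + p) * halfWidth L (u:Euc n) ^ (-p) ∂(sphMeasure n)
    with hmdef
  have hSpos : 0 < (sphMeasure n univ).toReal :=
    ENNReal.toReal_pos (sphMeasure_univ_pos hn).ne' (measure_ne_top _ _)
  have hint_pos : ∀ (f : sphere (0:Euc n) 1 → ℝ) (δ : ℝ), Continuous f → 0 < δ →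
      (∀ u, δ ≤ f u) → 0 < ∫ u, f u ∂(sphMeasure n) := by
    intro f δ hfc hδ hδf
    have h1 : ∫ _u, δ ∂(sphMeasure n) ≤ ∫ u, f u ∂(sphMeasure n) :=
      integral_mono (integrable_const δ) (integrable_cont _ f hfc) hδf
    rw [integral_const, smul_eq_mul, measureReal_def] at h1
    nlinarith
  have hbKq_cont : Continuous (fun u : sphere (0:Euc n) 1 => halfWidth K (u:Euc n) ^ q) :=
    hbKcont.rpow_const (fun u => Or.inl (hbKpos u).ne')
  have hmcont : Continuous (fun u : sphere (0:Euc n) 1 =>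
      halfWidth K (u:Euc n) ^ (q + p) * halfWidth L (u:Euc n) ^ (-p)) :=
    (hbKcont.rpow_const (fun u => Or.inl (hbKpos u).ne')).mul
      (hbLcont.rpow_const (fun u => Or.inl (hbLpos u).ne'))
  have ha0 : 0 < a := by
    apply hint_pos _ (εK ^ q) hbKq_cont (Real.rpow_pos_of_pos hεK q)
    intro u
    exact Real.rpow_le_rpow hεK.le (hbKb _ (hsph u)).1 hq0.le
  have hc0 : 0 < c := by
    apply hint_pos _ (εL ^ q) hbLq_cont (Real.rpow_pos_of_pos hεL q)
    intro u
    exact Real.rpow_le_rpow hεL.le (hbLb _ (hsph u)).1 hq0.le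
  have hm0 : 0 < m := by
    apply hint_pos _ (εK ^ (q+p) * RL ^ (-p)) hmcont
      (mul_pos (Real.rpow_pos_of_pos hεK _) (Real.rpow_pos_of_pos hRL _))
    intro u
    have h1 : εK ^ (q+p) ≤ halfWidth K (u:Euc n) ^ (q+p) :=
      Real.rpow_le_rpow hεK.le (hbKb _ (hsph u)).1 (by linarith)
    have h2 : RL ^ (-p) ≤ halfWidth L (u:Euc n) ^ (-p) :=
      Real.rpow_le_rpow_of_nonpos (hbLpos u) (hbLle u) (by linarith)
    exact mul_le_mul h1 h2 (Real.rpow_nonneg hRL.le _) (Real.rpow_nonneg (hbKpos u).le _)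
  -- integral conversions
  have hca : ∫ u, g u ∂ν = a := by
    rw [hconv g, hadef]
    apply integral_congr_ae
    filter_upwards with u
    exact hpt1 u
  have hcm : ∫ u, g u ^ ((q+p)/q) ∂ν = m := by
    rw [hconv (fun u => g u ^ ((q+p)/q)), hmdef]
    apply integral_congr_ae
    filter_upwards with u
    exact hpt2 u
  have hcc : (ν univ).toReal = c := by
    have h1 : ∫ _u, (1:ℝ) ∂ν = (ν univ).toReal := by
      rw [integral_const, smul_eq_mul, mul_one, measureReal_def]
    rw [← h1, hconv (fun _ => (1:ℝ)), hcdef]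
    apply integral_congr_ae
    filter_upwards with u
    rw [mul_one]
  have havg_g : ⨍ u, g u ∂ν = a / c := by
    rw [average_eq, measureReal_def, hca, hcc, smul_eq_mul, inv_mul_eq_div]
  have havg_gr : ⨍ u, g u ^ ((q+p)/q) ∂ν = m / c := by
    rw [average_eq, measureReal_def, hcm, hcc, smul_eq_mul, inv_mul_eq_div]
  -- Jensen
  have hJ := (strictConvexOn_rpow hr1).ae_eq_const_or_map_average_lt
    (fun x hx => (Real.continuousAt_rpow_const x ((q+p)/q) (Or.inr hr0.le)).continuousWithinAt)
    isClosed_Ici (Filter.Eventually.of_forall fun u => (hgpos u).le)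
    (integrable_cont ν g hgcont) (integrable_cont ν _ hgrcont)
  rw [havg_g] at hJ
  have hJ2 : g =ᵐ[ν] Function.const _ (a / c) ∨ (a/c) ^ ((q+p)/q) < m / c := by
    rcases hJ with h | h
    · exact Or.inl h
    · right
      rwa [havg_gr] at h
  have hkey : (a/c) ^ ((q+p)/q) ≤ m / c := by
    rcases hJ2 with h | h
    · have h1 : ⨍ u, g u ^ ((q+p)/q) ∂ν = ⨍ _u, (a/c) ^ ((q+p)/q) ∂ν := by
        apply average_congr
        filter_upwards [h] with u hu
        rw [hu]
        rfl
      rw [havg_gr] at h1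
      rw [h1, average_const]
    · exact h.le
  obtain ⟨hineq_iff, heq_iff⟩ := alg_key hm0 ha0 hc0 hn0 hq0 hp0
  -- translating the statement
  have eM : lpMixedWidthIntegral n i p K L = 1/(n:ℝ) * m := by
    rw [hmdef]
    rfl
  have eA : widthIntegral n i K = 1/(n:ℝ) * a := by
    rw [hadef]
    rfl
  have eC : widthIntegral n i L = 1/(n:ℝ) * c := by
    rw [hcdef]
    rfl
  -- the middle equivalence
  have hmid : (a/c) ^ ((q+p)/q) = m / c ↔ SimilarWidth K L := by
    constructor
    · intro h2
      have hconst : g =ᵐ[ν] Function.const _ (a / c) := by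
        rcases hJ2 with h | h
        · exact h
        · exact absurd h2 h.ne
      have hae : ∀ᵐ u ∂(sphMeasure n), (d u : ℝ≥0∞) ≠ 0 → g u = a / c :=
        (ae_withDensity_iff hdmeas').1 hconst
      have hae2 : g =ᵐ[sphMeasure n] (fun _ => a / c) := by
        filter_upwards [hae] with u hu
        exact hu (hdne u)
      have hfun : g = fun _ => a / c :=
        (hgcont.ae_eq_iff_eq (sphMeasure n) continuous_const).1 hae2
      have hACpos : 0 < a / c := div_pos ha0 hc0
      refine ⟨((a/c) ^ (1/q))⁻¹, by positivity, ?_⟩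
      intro u hu
      have hmem : u ∈ sphere (0:Euc n) 1 := by
        rwa [mem_sphere_zero_iff_norm]
      have hg1 : (halfWidth K u / halfWidth L u) ^ q = a / c := by
        have := congrFun hfun ⟨u, hmem⟩
        simpa [hgdef] using this
      have hxpos := hratio_pos ⟨u, hmem⟩
      have hx : halfWidth K u / halfWidth L u = (a/c) ^ (1/q) := by
        have h3 : ((halfWidth K u / halfWidth L u) ^ q) ^ (1/q)
            = halfWidth K u / halfWidth L u := by
          rw [← Real.rpow_mul (le_of_lt hxpos), mul_one_div, div_self hq0.ne',
            Real.rpow_one]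
        rw [← h3, hg1]
      have hLpos := hbLpos ⟨u, hmem⟩
      have hKpos := hbKpos ⟨u, hmem⟩
      have htpos : 0 < (a/c) ^ (1/q) := Real.rpow_pos_of_pos hACpos _
      rw [div_eq_iff hLpos.ne'] at hx
      rw [hx, ← mul_assoc, inv_mul_cancel₀ htpos.ne', one_mul]
    · intro hsim
      obtain ⟨lam, hlam, hlamEq⟩ := hsim
      have hgc : g = fun _ => (lam⁻¹ : ℝ) ^ q := by
        funext u
        simp only [hgdef]
        have h1 : halfWidth L (u:Euc n) = lam * halfWidth K (u:Euc n) :=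
          hlamEq _ (hsph u)
        rw [h1]
        congr 1
        rw [div_mul_eq_div_div_swap, div_self (hbKpos u).ne', one_div]
      have hAc : a / c = (lam⁻¹ : ℝ) ^ q := by
        rw [← havg_g]
        simp only [hgc]
        rw [average_const]
      have hMc : m / c = ((lam⁻¹ : ℝ) ^ q) ^ ((q+p)/q) := by
        rw [← havg_gr]
        simp only [hgc]
        rw [average_const]
      rw [hAc, hMc]
  refine ⟨?_, ?_⟩
  · rw [eM, eA, eC]
    exact hineq_iff.1 hkey
  · rw [eM, eA, eC]
    exact heq_iff.symm.trans hmid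


end
end

section
/- Let K, L ∈ 𝒦ⁿ, let i be an integer with 0 ≤ i < n, and let p ≥ 1 be a real number. Then A_i(K +_p L)^{−p/(n−i)} ≥ A_i(K)^{−p/(n−i)} + A_i(L)^{−p/(n−i)}, with equality if and only if K and L have similar width. -/
open MeasureTheory Metric Filter Set
open scoped RealInnerProductSpace ENNReal

noncomputable section

/-- The half-width function of the `L_p` width addition `K +_p L`:
`b(K +_p L, u) = (b(K,u)^{-p} + b(L,u)^{-p})^{-1/p}`. -/
def lpAddHalfWidth {n : ℕ} (p : ℝ) (K L : Set (Euc n)) (u : Euc n) : ℝ :=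
  (halfWidth K u ^ (-p) + halfWidth L u ^ (-p)) ^ (-1 / p)

/-- `A_i(K +_p L) = (1/n) ∫ b(K +_p L, u)^{n-i} dS(u)`. -/
def lpAddWidthIntegral (n i : ℕ) (p : ℝ) (K L : Set (Euc n)) : ℝ :=
  (1 / (n : ℝ)) * ∫ u : sphere (0 : Euc n) 1,
    lpAddHalfWidth p K L (u : Euc n) ^ ((n : ℝ) - i) ∂(sphMeasure n)

open scoped NNReal

namespace Hlp

/-! ### support function and half width -/

variable {n : ℕ} {K : Set (Euc n)}

lemma bddAbove_inner (hK : IsCompact K) (x : Euc n) :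
    BddAbove ((fun y => ⟪x, y⟫) '' K) :=
  (hK.image (continuous_const.inner continuous_id)).bddAbove

lemma le_suppFn (hK : IsCompact K) {x y : Euc n} (hy : y ∈ K) :
    ⟪x, y⟫ ≤ suppFn K x :=
  le_csSup (bddAbove_inner hK x) (mem_image_of_mem _ hy)

lemma suppFn_le (hne : K.Nonempty) {x : Euc n} {c : ℝ}
    (h : ∀ y ∈ K, ⟪x, y⟫ ≤ c) : suppFn K x ≤ c :=
  csSup_le (hne.image _) (by rintro _ ⟨y, hy, rfl⟩; exact h y hy)

lemma suppFn_lipschitz (hK : IsCompact K) (hne : K.Nonempty) :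
    ∃ C : ℝ≥0, LipschitzWith C (suppFn K) := by
  obtain ⟨R, hR⟩ := hK.isBounded.exists_norm_le
  refine ⟨(max R 0).toNNReal, LipschitzWith.of_dist_le_mul fun x x' => ?_⟩
  rw [Real.coe_toNNReal _ (le_max_right R 0)]
  have key : ∀ a b : Euc n, suppFn K a - suppFn K b ≤ max R 0 * dist a b := by
    intro a b
    rw [sub_le_iff_le_add]
    refine suppFn_le hne fun y hy => ?_
    have heq : ⟪a, y⟫ = ⟪b, y⟫ + ⟪a - b, y⟫ := by
      rw [← inner_add_left]; congr 1; abel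
    rw [heq]
    have h1 : ⟪a - b, y⟫ ≤ ‖a - b‖ * ‖y‖ := real_inner_le_norm _ _
    have h2 : ‖a - b‖ * ‖y‖ ≤ dist a b * max R 0 := by
      rw [dist_eq_norm]
      exact mul_le_mul_of_nonneg_left ((hR y hy).trans (le_max_left _ _)) (norm_nonneg _)
    have h3 : ⟪b, y⟫ ≤ suppFn K b := le_suppFn hK hy
    linarith
  rw [Real.dist_eq, abs_sub_le_iff]
  constructor
  · simpa using key x x'
  · simpa [dist_comm] using key x' x

lemma continuous_suppFn (hK : IsCompact K) (hne : K.Nonempty) :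
    Continuous (suppFn K) := by
  obtain ⟨C, hC⟩ := suppFn_lipschitz hK hne
  exact hC.continuous

lemma continuous_halfWidth (hK : IsConvexBody K) : Continuous (halfWidth K) := by
  have hne : K.Nonempty := ⟨0, interior_subset hK.2.2⟩
  have h := continuous_suppFn hK.1 hne
  exact ((h.add (h.comp continuous_neg)).div_const 2)

lemma halfWidth_pos (hK : IsConvexBody K) {u : Euc n} (hu : ‖u‖ = 1) :
    0 < halfWidth K u := by
  obtain ⟨ε, hε, hball⟩ := Metric.mem_nhds_iff.1 (mem_interior_iff_mem_nhds.1 hK.2.2)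
  have key : ∀ v : Euc n, ‖v‖ = 1 → ε / 2 ≤ suppFn K v := by
    intro v hv
    have hmem : (ε / 2) • v ∈ K := by
      apply hball
      simp only [Metric.mem_ball, dist_zero_right, norm_smul, hv, mul_one]
      rw [Real.norm_eq_abs, abs_of_pos (by linarith)]
      linarith
    have : ⟪v, (ε / 2) • v⟫ = ε / 2 := by
      rw [real_inner_smul_right, real_inner_self_eq_norm_sq, hv]; ring
    calc ε / 2 = ⟪v, (ε / 2) • v⟫ := this.symm
      _ ≤ suppFn K v := le_suppFn hK.1 hmem
  have h1 := key u hu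
  have h2 := key (-u) (by simpa using hu)
  unfold halfWidth
  linarith

/-! ### the sphere measure is positive on open sets -/

lemma sphMeasure_isOpenPos {n : ℕ} (hn : 1 ≤ n) :
    (sphMeasure n).IsOpenPosMeasure := by
  constructor
  intro U hU hne
  have hmeas : MeasurableSet U := hU.measurableSet
  rw [sphMeasure, Measure.toSphere_apply' _ hmeas, ←
    Measure.toSphere_apply_aux (volume : Measure (Euc n)) U ⟨1, mem_Ioi.2 one_pos⟩]
  set V : Set ({(0 : Euc n)}ᶜ : Set (Euc n)) :=
    homeomorphUnitSphereProd (Euc n) ⁻¹' (U ×ˢ Iio (⟨1, mem_Ioi.2 one_pos⟩ : Ioi (0:ℝ))) with hV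
  have hVopen : IsOpen V :=
    (hU.prod isOpen_Iio).preimage (homeomorphUnitSphereProd (Euc n)).continuous
  have himg : IsOpen (Subtype.val '' V) :=
    (isOpen_compl_singleton).isOpenMap_subtype_val V hVopen
  have hVne : (Subtype.val '' V).Nonempty := by
    obtain ⟨u, hu⟩ := hne
    refine ⟨_, mem_image_of_mem _ (?_ : (homeomorphUnitSphereProd (Euc n)).symm
      (u, ⟨(1:ℝ)/2, by norm_num⟩) ∈ V)⟩
    simp only [hV, mem_preimage, Homeomorph.apply_symm_apply]
    refine ⟨hu, ?_⟩
    show (⟨(1:ℝ)/2, by norm_num⟩ : Ioi (0:ℝ)) < ⟨1, mem_Ioi.2 one_pos⟩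
    rw [Subtype.mk_lt_mk]
    norm_num
  have hpos := himg.measure_pos (volume : Measure (Euc n)) hVne
  have hdim : (0:ℝ≥0∞) < Module.finrank ℝ (Euc n) := by
    have : Module.finrank ℝ (Euc n) = n := finrank_euclideanSpace_fin
    rw [this]
    exact_mod_cast Nat.pos_of_ne_zero (by omega)
  exact (ENNReal.mul_pos hdim.ne' hpos.ne').ne'

/-! ### the profile function `phi` -/

def phi (t : ℝ) (s : ℝ) : ℝ := (1 + s ^ (-t)) ^ (-1 / t)

variable {t : ℝ}

lemma phi_inner_pos (ht : 0 < t) {s : ℝ} (hs : 0 < s) : 0 < 1 + s ^ (-t) := by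
  have := Real.rpow_pos_of_pos hs (-t); linarith

lemma phi_pos (ht : 0 < t) {s : ℝ} (hs : 0 < s) : 0 < phi t s :=
  Real.rpow_pos_of_pos (phi_inner_pos ht hs) _

lemma hasDerivAt_phi (ht : 0 < t) {s : ℝ} (hs : 0 < s) :
    HasDerivAt (phi t) ((1 + s ^ t) ^ (-(1 + t) / t)) s := by
  have htne : t ≠ 0 := ht.ne'
  have hA : (0:ℝ) < 1 + s ^ (-t) := phi_inner_pos ht hs
  have h1 : HasDerivAt (fun s : ℝ => 1 + s ^ (-t)) (-t * s ^ (-t - 1)) s := by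
    simpa using (Real.hasDerivAt_rpow_const (x := s) (p := -t) (Or.inl hs.ne')).const_add 1
  have h2 : HasDerivAt (fun x : ℝ => x ^ (-1 / t))
      ((-1 / t) * (1 + s ^ (-t)) ^ (-1 / t - 1)) (1 + s ^ (-t)) :=
    Real.hasDerivAt_rpow_const (Or.inl hA.ne')
  have h3 := h2.comp s h1
  refine h3.congr_deriv (Eq.symm ?_)
  show (1 + s ^ t) ^ (-(1 + t) / t)
      = (-1 / t) * (1 + s ^ (-t)) ^ (-1 / t - 1) * (-t * s ^ (-t - 1))
  have key : (1 + s ^ t) = (1 + s ^ (-t)) * s ^ t := by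
    rw [add_mul, one_mul, ← Real.rpow_add hs]
    norm_num [add_comm]
  have e1 : -(1 + t) / t = -1 / t - 1 := by field_simp; ring
  have e2 : t * (-(1 + t) / t) = -t - 1 := by field_simp; ring
  calc (1 + s ^ t) ^ (-(1 + t) / t)
      = ((1 + s ^ (-t)) * s ^ t) ^ (-(1 + t) / t) := by rw [← key]
    _ = (1 + s ^ (-t)) ^ (-(1 + t) / t) * (s ^ t) ^ (-(1 + t) / t) :=
        Real.mul_rpow hA.le (Real.rpow_pos_of_pos hs t).le
    _ = (1 + s ^ (-t)) ^ (-1 / t - 1) * s ^ (-t - 1) := by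
        rw [← Real.rpow_mul hs.le, e2, e1]
    _ = (-1 / t) * (1 + s ^ (-t)) ^ (-1 / t - 1) * (-t * s ^ (-t - 1)) := by
        field_simp

lemma continuousOn_phi (ht : 0 < t) : ContinuousOn (phi t) (Ioi 0) := by
  apply ContinuousOn.rpow_const
  · exact continuousOn_const.add (continuousOn_id.rpow_const
      (fun x hx => Or.inl (ne_of_gt hx)))
  · exact fun x hx => Or.inl (phi_inner_pos ht hx).ne'

lemma strictConcaveOn_phi (ht : 0 < t) : StrictConcaveOn ℝ (Ioi 0) (phi t) := by
  apply StrictAntiOn.strictConcaveOn_of_deriv (convex_Ioi 0) (continuousOn_phi ht)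
  rw [interior_Ioi]
  intro a ha b hb hab
  rw [(hasDerivAt_phi ht ha).deriv, (hasDerivAt_phi ht hb).deriv]
  apply Real.rpow_lt_rpow_of_neg
  · have := Real.rpow_pos_of_pos ha t; linarith
  · have : a ^ t < b ^ t := Real.rpow_lt_rpow (le_of_lt ha) hab ht
    linarith
  · exact div_neg_of_neg_of_pos (by linarith) ht

lemma mul_phi_div (ht : 0 < t) {x y : ℝ} (hx : 0 < x) (hy : 0 < y) :
    x * phi t (y / x) = (x ^ (-t) + y ^ (-t)) ^ (-1 / t) := by
  have htne : t ≠ 0 := ht.ne'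
  have h1 : (y / x) ^ (-t) = y ^ (-t) * x ^ t := by
    rw [Real.div_rpow hy.le hx.le, Real.rpow_neg hx.le, div_eq_mul_inv, inv_inv]
  have h2 : 1 + (y / x) ^ (-t) = x ^ t * (x ^ (-t) + y ^ (-t)) := by
    rw [h1, mul_add, ← Real.rpow_add hx]
    simp [add_comm]; ring
  have h3 : (x ^ t) ^ (-1 / t) = x⁻¹ := by
    rw [← Real.rpow_mul hx.le]
    rw [show t * (-1 / t) = -1 by field_simp, Real.rpow_neg_one]
  rw [phi, h2, Real.mul_rpow (Real.rpow_pos_of_pos hx t).le (by positivity), h3]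
  field_simp

lemma lp_pow {p m : ℝ} (hm : 0 < m) (hp : 0 < p) {x y : ℝ} (hx : 0 < x) (hy : 0 < y) :
    ((x ^ (-p) + y ^ (-p)) ^ (-1 / p)) ^ m
      = ((x ^ m) ^ (-(p / m)) + (y ^ m) ^ (-(p / m))) ^ (-1 / (p / m)) := by
  have hS : (0:ℝ) < x ^ (-p) + y ^ (-p) := by positivity
  have e1 : ∀ z : ℝ, 0 < z → (z ^ m) ^ (-(p / m)) = z ^ (-p) := by
    intro z hz
    rw [← Real.rpow_mul hz.le]
    congr 1
    field_simp
  rw [e1 x hx, e1 y hy, ← Real.rpow_mul hS.le]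
  congr 1
  field_simp

lemma lp_scale (ht : 0 < t) {s x : ℝ} (hs : 0 < s) (hx : 0 < x) :
    (x ^ (-t) + (s * x) ^ (-t)) ^ (-1 / t) = (1 + s ^ (-t)) ^ (-1 / t) * x := by
  have h1 : x ^ (-t) + (s * x) ^ (-t) = (1 + s ^ (-t)) * x ^ (-t) := by
    rw [Real.mul_rpow hs.le hx.le]; ring
  have h2 : (x ^ (-t)) ^ (-1 / t) = x := by
    rw [← Real.rpow_mul hx.le, show -t * (-1 / t) = 1 by field_simp, Real.rpow_one]
  rw [h1, Real.mul_rpow (phi_inner_pos ht hs).le (by positivity), h2]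

/-! ### integration helpers -/

lemma integrable_of_cont {X : Type*} [TopologicalSpace X] [CompactSpace X] [Nonempty X]
    [MeasurableSpace X] [OpensMeasurableSpace X] (μ : Measure X) [IsFiniteMeasure μ]
    {ψ : X → ℝ} (hψ : Continuous ψ) : Integrable ψ μ := by
  obtain ⟨x, -, hx⟩ := isCompact_univ.exists_isMaxOn univ_nonempty hψ.norm.continuousOn
  exact (integrable_const ‖ψ x‖).mono' hψ.aestronglyMeasurable
    (Filter.Eventually.of_forall fun y => by simpa using hx (mem_univ y))

lemma integral_pos_of_cont {X : Type*} [TopologicalSpace X] [CompactSpace X] [Nonempty X]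
    [MeasurableSpace X] [OpensMeasurableSpace X] (μ : Measure X) [IsFiniteMeasure μ]
    (h0 : μ ≠ 0) {ψ : X → ℝ} (hψ : Continuous ψ) (hpos : ∀ x, 0 < ψ x) :
    0 < ∫ x, ψ x ∂μ := by
  obtain ⟨x, -, hx⟩ := isCompact_univ.exists_isMinOn univ_nonempty hψ.continuousOn
  have h1 : 0 < (μ univ).toReal :=
    ENNReal.toReal_pos (Measure.measure_univ_ne_zero.2 h0) (measure_ne_top _ _)
  have h2 := integral_mono (integrable_const (ψ x)) (integrable_of_cont μ hψ)
    (fun y => hx (mem_univ y))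
  rw [integral_const, smul_eq_mul] at h2
  rw [measureReal_def] at h2
  nlinarith [hpos x]

end Hlp

open Hlp

/-- `L_p` Brunn–Minkowski inequality for width integrals, with the equality
characterization. -/
theorem lpAddWidthIntegral_rpow_ge {n : ℕ} (hn : 2 ≤ n) (i : ℕ) (hi : i < n)
    (p : ℝ) (hp : 1 ≤ p)
    (K L : Set (Euc n)) (hK : IsConvexBody K) (hL : IsConvexBody L) :
    lpAddWidthIntegral n i p K L ^ (-p / ((n : ℝ) - i)) ≥
      widthIntegral n i K ^ (-p / ((n : ℝ) - i)) +
        widthIntegral n i L ^ (-p / ((n : ℝ) - i)) ∧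
    (lpAddWidthIntegral n i p K L ^ (-p / ((n : ℝ) - i)) =
        widthIntegral n i K ^ (-p / ((n : ℝ) - i)) +
          widthIntegral n i L ^ (-p / ((n : ℝ) - i)) ↔
      SimilarWidth K L) := by
  -- basic positivity facts
  have hp0 : 0 < p := lt_of_lt_of_le one_pos hp
  have hm : (0:ℝ) < (n : ℝ) - i := by
    have : (i:ℝ) < n := by exact_mod_cast hi
    linarith
  set m : ℝ := (n : ℝ) - i with hm_def
  set t : ℝ := p / m with ht_def
  have ht : 0 < t := div_pos hp0 hm
  have htm : t * m = p := by rw [ht_def]; field_simp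
  -- the sphere
  set S := sphere (0 : Euc n) 1
  haveI : Nonempty S := by
    refine ⟨⟨EuclideanSpace.single (⟨0, by omega⟩ : Fin n) (1:ℝ), ?_⟩⟩
    rw [mem_sphere_zero_iff_norm, EuclideanSpace.norm_single]
    norm_num
  set μ := sphMeasure n with hμ_def
  haveI : IsFiniteMeasure μ := by rw [hμ_def, sphMeasure]; infer_instance
  haveI : μ.IsOpenPosMeasure := sphMeasure_isOpenPos (by omega)
  have hμ0 : μ ≠ 0 := by
    intro h
    exact (isOpen_univ.measure_ne_zero μ univ_nonempty) (by rw [h]; rfl)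
  -- the half width functions
  set f : S → ℝ := fun u => halfWidth K (u : Euc n) with hf_def
  set g : S → ℝ := fun u => halfWidth L (u : Euc n) with hg_def
  have hunorm : ∀ u : S, ‖(u : Euc n)‖ = 1 := fun u => mem_sphere_zero_iff_norm.mp u.2
  have hfpos : ∀ u, 0 < f u := fun u => halfWidth_pos hK (hunorm u)
  have hgpos : ∀ u, 0 < g u := fun u => halfWidth_pos hL (hunorm u)
  have hfc : Continuous f := (continuous_halfWidth hK).comp continuous_subtype_val
  have hgc : Continuous g := (continuous_halfWidth hL).comp continuous_subtype_val
  set F : S → ℝ := fun u => f u ^ m with hF_def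
  set G : S → ℝ := fun u => g u ^ m with hG_def
  have hFpos : ∀ u, 0 < F u := fun u => Real.rpow_pos_of_pos (hfpos u) m
  have hGpos : ∀ u, 0 < G u := fun u => Real.rpow_pos_of_pos (hgpos u) m
  have hFc : Continuous F := hfc.rpow_const fun u => Or.inl (hfpos u).ne'
  have hGc : Continuous G := hgc.rpow_const fun u => Or.inl (hgpos u).ne'
  set hpw : S → ℝ := fun u => lpAddHalfWidth p K L (u : Euc n) ^ m with hpw_def
  have hpw_eq : ∀ u, hpw u = (F u ^ (-t) + G u ^ (-t)) ^ (-1 / t) := by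
    intro u
    exact lp_pow hm hp0 (hfpos u) (hgpos u)
  have hpwpos : ∀ u, 0 < hpw u := by
    intro u
    rw [hpw_eq u]
    have h1 := Real.rpow_pos_of_pos (hFpos u) (-t)
    have h2 := Real.rpow_pos_of_pos (hGpos u) (-t)
    exact Real.rpow_pos_of_pos (by linarith) _
  have hpwc : Continuous hpw := by
    have : hpw = fun u => (F u ^ (-t) + G u ^ (-t)) ^ (-1 / t) := funext hpw_eq
    rw [this]
    refine Continuous.rpow_const ?_ fun u => Or.inl ?_
    · exact (hFc.rpow_const fun u => Or.inl (hFpos u).ne').add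
        (hGc.rpow_const fun u => Or.inl (hGpos u).ne')
    · have h1 := Real.rpow_pos_of_pos (hFpos u) (-t)
      have h2 := Real.rpow_pos_of_pos (hGpos u) (-t)
      exact (by linarith : (0:ℝ) < F u ^ (-t) + G u ^ (-t)).ne'
  -- the three integrals
  set a : ℝ := ∫ u, F u ∂μ with ha_def
  set b : ℝ := ∫ u, G u ∂μ with hb_def
  set c : ℝ := ∫ u, hpw u ∂μ with hc_def
  have ha : 0 < a := integral_pos_of_cont μ hμ0 hFc hFpos
  have hb : 0 < b := integral_pos_of_cont μ hμ0 hGc hGpos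
  have hc : 0 < c := integral_pos_of_cont μ hμ0 hpwc hpwpos
  have hAK : widthIntegral n i K = (1 / (n:ℝ)) * a := rfl
  have hAL : widthIntegral n i L = (1 / (n:ℝ)) * b := rfl
  have hAP : lpAddWidthIntegral n i p K L = (1 / (n:ℝ)) * c := rfl
  -- the weighted measure
  set ν : Measure S := μ.withDensity (fun u => ENNReal.ofReal (F u)) with hν_def
  have hFi : Integrable F μ := integrable_of_cont μ hFc
  haveI : IsFiniteMeasure ν := isFiniteMeasure_withDensity_ofReal hFi.hasFiniteIntegral
  have hνuniv : ν univ = ENNReal.ofReal a := by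
    rw [hν_def, withDensity_apply _ MeasurableSet.univ, setLIntegral_univ,
      ← ofReal_integral_eq_lintegral_ofReal hFi
        (Filter.Eventually.of_forall fun u => (hFpos u).le)]
  haveI : NeZero ν := ⟨Measure.measure_univ_ne_zero.mp
    (by rw [hνuniv]; exact (ENNReal.ofReal_pos.2 ha).ne')⟩
  have hνtoReal : (ν univ).toReal = a := by rw [hνuniv, ENNReal.toReal_ofReal ha.le]
  -- integral transfer
  have transfer : ∀ ψ : S → ℝ, ∫ x, ψ x ∂ν = ∫ x, F x * ψ x ∂μ := by
    intro ψ
    have hrepr : ν = μ.withDensity (fun u => ((F u).toNNReal : ℝ≥0∞)) := rfl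
    rw [hrepr, integral_withDensity_eq_integral_smul hFc.measurable.real_toNNReal]
    refine integral_congr_ae (Filter.Eventually.of_forall fun x => ?_)
    simp [NNReal.smul_def, Real.coe_toNNReal _ (hFpos x).le]
  -- the ratio function
  set Rt : S → ℝ := fun u => G u / F u with hRt_def
  have hRtpos : ∀ u, 0 < Rt u := fun u => div_pos (hGpos u) (hFpos u)
  have hRtc : Continuous Rt := hGc.div hFc fun u => (hFpos u).ne'
  obtain ⟨xmin, -, hxmin⟩ := isCompact_univ.exists_isMinOn univ_nonempty hRtc.continuousOn
  obtain ⟨xmax, -, hxmax⟩ := isCompact_univ.exists_isMaxOn univ_nonempty hRtc.continuousOn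
  set δ : ℝ := Rt xmin with hδ_def
  set Rmax : ℝ := Rt xmax with hRmax_def
  have hδpos : 0 < δ := hRtpos xmin
  have hIcc_sub : Icc δ Rmax ⊆ Ioi 0 := fun x hx => lt_of_lt_of_le hδpos hx.1
  -- integrals over ν
  have hint1 : ∫ x, Rt x ∂ν = b := by
    rw [transfer]
    refine integral_congr_ae (Filter.Eventually.of_forall fun x => ?_)
    simp only [hRt_def]
    rw [mul_comm, div_mul_cancel₀ _ (hFpos x).ne']
  have hint2 : ∫ x, phi t (Rt x) ∂ν = c := by
    rw [transfer]
    refine integral_congr_ae (Filter.Eventually.of_forall fun x => ?_)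
    simp only [hRt_def]
    rw [mul_phi_div ht (hFpos x) (hGpos x), ← hpw_eq x]
  have havg1 : ⨍ x, Rt x ∂ν = b / a := by
    rw [average_eq, measureReal_def, hνtoReal, hint1, smul_eq_mul, inv_mul_eq_div]
  have havg2 : ⨍ x, phi t (Rt x) ∂ν = c / a := by
    rw [average_eq, measureReal_def, hνtoReal, hint2, smul_eq_mul, inv_mul_eq_div]
  -- Jensen hypotheses
  have hmemIcc : ∀ᵐ x ∂ν, Rt x ∈ Icc δ Rmax :=
    Filter.Eventually.of_forall fun x => ⟨hxmin (mem_univ x), hxmax (mem_univ x)⟩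
  have hRti : Integrable Rt ν := integrable_of_cont ν hRtc
  have hphiRc : Continuous (phi t ∘ Rt) :=
    (continuousOn_phi ht).comp_continuous hRtc fun x => hRtpos x
  have hphiRi : Integrable (phi t ∘ Rt) ν := integrable_of_cont ν hphiRc
  have hconc : StrictConcaveOn ℝ (Icc δ Rmax) (phi t) :=
    (strictConcaveOn_phi ht).subset hIcc_sub (convex_Icc _ _)
  have hcontIcc : ContinuousOn (phi t) (Icc δ Rmax) := (continuousOn_phi ht).mono hIcc_sub
  -- non-strict Jensen: c ≤ a * phi t (b/a)
  have key1 : c ≤ (a ^ (-t) + b ^ (-t)) ^ (-1 / t) := by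
    have h := hconc.concaveOn.le_map_average hcontIcc isClosed_Icc hmemIcc hRti hphiRi
    rw [havg1] at h
    have h' : ⨍ x, phi t (Rt x) ∂ν ≤ phi t (b / a) := h
    rw [havg2] at h'
    have := (div_le_iff₀ ha).mp h'
    rw [mul_comm] at this
    rw [← mul_phi_div ht ha hb]
    exact this
  -- equality characterization
  have keyeq : c = (a ^ (-t) + b ^ (-t)) ^ (-1 / t) ↔ SimilarWidth K L := by
    constructor
    · intro hceq
      rcases hconc.ae_eq_const_or_lt_map_average hcontIcc isClosed_Icc hmemIcc hRti hphiRi with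
        hconst | hlt
      · -- constant ratio a.e.
        rw [havg1] at hconst
        have hae : ∀ᵐ x ∂μ, Rt x = b / a := by
          rw [hν_def] at hconst
          rw [Filter.EventuallyEq, ae_withDensity_iff hFc.measurable.ennreal_ofReal] at hconst
          filter_upwards [hconst] with x hx
          exact hx (by simp [ENNReal.ofReal_pos.2 (hFpos x), (ENNReal.ofReal_pos.2 (hFpos x)).ne'])
        have hall : Rt = fun _ => b / a := by
          have heq : Rt =ᵐ[μ] fun _ => b / a := hae
          exact (hRtc.ae_eq_iff_eq μ continuous_const).mp heq
        -- build SimilarWidth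
        set lam : ℝ := (b / a) ^ m⁻¹ with hlam_def
        have hba : 0 < b / a := div_pos hb ha
        refine ⟨lam, Real.rpow_pos_of_pos hba _, fun u hu => ?_⟩
        set us : S := ⟨u, mem_sphere_zero_iff_norm.mpr hu⟩ with hus_def
        have h0 : G us / F us = b / a := by
          have := congrFun hall us
          simpa [hRt_def] using this
        have h1 : G us = (b / a) * F us := by
          rw [← h0, div_mul_cancel₀ _ (hFpos us).ne']
        have h2 : g us = lam * f us := by
          have hg' : g us = (G us) ^ m⁻¹ := by
            rw [hG_def, ← Real.rpow_mul (hgpos us).le,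
              mul_inv_cancel₀ hm.ne', Real.rpow_one]
          rw [hg', h1, Real.mul_rpow hba.le (hFpos us).le, hlam_def, hF_def,
            ← Real.rpow_mul (hfpos us).le, mul_inv_cancel₀ hm.ne', Real.rpow_one]
        exact h2
      · -- strict inequality contradicts hceq
        exfalso
        rw [havg1, havg2] at hlt
        have : c < a * phi t (b / a) := by
          rw [mul_comm]
          exact (div_lt_iff₀ ha).mp hlt
        rw [mul_phi_div ht ha hb] at this
        rw [hceq] at this
        exact lt_irrefl _ this
    · -- similar width implies equality
      rintro ⟨lam, hlam, hsim⟩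
      have hguf : ∀ u : S, g u = lam * f u := fun u => hsim (u : Euc n) (hunorm u)
      have hGF : ∀ u : S, G u = lam ^ m * F u := by
        intro u
        simp only [hG_def, hF_def]
        rw [hguf u, Real.mul_rpow hlam.le (hfpos u).le]
      have hlamm : 0 < lam ^ m := Real.rpow_pos_of_pos hlam m
      have hbval : b = lam ^ m * a := by
        rw [hb_def, ha_def, ← integral_const_mul]
        exact integral_congr_ae (Filter.Eventually.of_forall fun u => hGF u)
      have hcval : c = (1 + (lam ^ m) ^ (-t)) ^ (-1 / t) * a := by
        rw [hc_def, ha_def, ← integral_const_mul]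
        refine integral_congr_ae (Filter.Eventually.of_forall fun u => ?_)
        rw [hpw_eq u, hGF u, lp_scale ht hlamm (hFpos u)]
      rw [hcval, hbval, lp_scale ht hlamm ha]
  -- translate to the statement
  have hexp : -p / ((n : ℝ) - i) = -t := by
    rw [ht_def, ← hm_def, neg_div]
  set κ : ℝ := 1 / (n : ℝ) with hκ_def
  have hκpos : 0 < κ := by
    rw [hκ_def]
    have : (0:ℝ) < n := by exact_mod_cast (by omega : 0 < n)
    positivity
  have hκt : 0 < κ ^ (-t) := Real.rpow_pos_of_pos hκpos _
  set Ssum : ℝ := a ^ (-t) + b ^ (-t) with hSsum_def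
  have hSsum : 0 < Ssum := by positivity
  have hΦpos : 0 < Ssum ^ (-1/t) := Real.rpow_pos_of_pos hSsum _
  have hΦt : (Ssum ^ (-1/t)) ^ (-t) = Ssum := by
    rw [← Real.rpow_mul hSsum.le, show -1/t * (-t) = 1 by field_simp, Real.rpow_one]
  have main : a ^ (-t) + b ^ (-t) ≤ c ^ (-t) := by
    rw [← hSsum_def, ← hΦt]
    exact Real.rpow_le_rpow_of_nonpos hc key1 (neg_nonpos.2 ht.le)
  have main_eq : c ^ (-t) = a ^ (-t) + b ^ (-t) ↔ SimilarWidth K L := by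
    rw [← keyeq, ← hSsum_def]
    constructor
    · intro h
      rcases lt_trichotomy c (Ssum ^ (-1/t)) with hlt | heq | hgt
      · exfalso
        have := Real.rpow_lt_rpow_of_neg hc hlt (neg_neg_iff_pos.mpr ht)
        rw [hΦt] at this
        linarith [h ▸ this]
      · exact heq
      · exfalso
        have := Real.rpow_lt_rpow_of_neg hΦpos hgt (neg_neg_iff_pos.mpr ht)
        rw [hΦt] at this
        linarith [h ▸ this]
    · intro h
      rw [h, hΦt]
  have hmulrw : ∀ x : ℝ, 0 < x → (κ * x) ^ (-t) = κ ^ (-t) * x ^ (-t) :=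
    fun x hx => Real.mul_rpow hκpos.le hx.le
  rw [hAP, hAK, hAL, hexp, hmulrw a ha, hmulrw b hb, hmulrw c hc]
  constructor
  · have h := mul_le_mul_of_nonneg_left main hκt.le
    rw [mul_add] at h
    exact h
  · rw [← mul_add]
    constructor
    · intro h
      exact main_eq.mp (mul_left_cancel₀ hκt.ne' h)
    · intro h
      rw [main_eq.mpr h]


end
end

section
/- Let m ≥ 2 and φ ∈ Φ. For each j = 1, …, m, let K_{ij} ∈ 𝒦ⁿ (i ∈ ℕ ∪ {0}) be convex bodies with K_{ij} → K_{0j} in the Hausdorff metric as i → ∞. Then for every unit vector u ∈ S^{n−1}, b(+_φ(K_{i1},…,K_{im}), u) → b(+_φ(K_{01},…,K_{0m}), u) as i → ∞; that is, the Orlicz width addition is continuous. -/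
open MeasureTheory Metric Filter Set
open scoped RealInnerProductSpace ENNReal

noncomputable section

/-- Half-width function of the Orlicz width addition `K_1 +_φ ⋯ +_φ K_m`
(with `φ(x_1,…,x_m) = φ(x_1) + ⋯ + φ(x_m)`), given the half widths
`b j = b(K_j, u)`. -/
def orliczWidthSum {m : ℕ} (φ : ℝ → ℝ) (b : Fin m → ℝ) : ℝ :=
  sSup {lam : ℝ | 0 < lam ∧ ∑ j, φ (b j / lam) ≤ 1}

section Aux

variable {n : ℕ}

lemma suppFn_bddAbove {K : Set (Euc n)} (hK : IsCompact K) (x : Euc n) :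
    BddAbove ((fun y => ⟪x, y⟫) '' K) :=
  (hK.image (continuous_const.inner continuous_id)).bddAbove

lemma le_suppFn_s6 {K : Set (Euc n)} (hK : IsCompact K) (x : Euc n) {y : Euc n} (hy : y ∈ K) :
    ⟪x, y⟫ ≤ suppFn K x :=
  le_csSup (suppFn_bddAbove hK x) ⟨y, hy, rfl⟩

lemma suppFn_le_add {K L : Set (Euc n)} (hKc : IsCompact K) (hLc : IsCompact L)
    (hKne : K.Nonempty) (hLne : L.Nonempty) {x : Euc n} (hx : ‖x‖ = 1) :
    suppFn K x ≤ suppFn L x + hausdorffDist K L := by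
  apply csSup_le (hKne.image _)
  rintro r ⟨y, hy, rfl⟩
  have h1 : ⟪x, y⟫ - suppFn L x ≤ infDist y L := by
    by_contra h
    push_neg at h
    obtain ⟨z, hz, hdz⟩ := (infDist_lt_iff hLne).1 h
    have h2 : ⟪x, y⟫ - ⟪x, z⟫ ≤ dist y z := by
      have := real_inner_le_norm x (y - z)
      rw [inner_sub_right] at this
      rw [dist_eq_norm]
      calc ⟪x, y⟫ - ⟪x, z⟫ ≤ ‖x‖ * ‖y - z‖ := this
        _ = ‖y - z‖ := by rw [hx, one_mul]
    have h3 := le_suppFn_s6 hLc x hz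
    linarith
  have h2 : infDist y L ≤ hausdorffDist K L :=
    infDist_le_hausdorffDist_of_mem hy
      (hausdorffEdist_ne_top_of_nonempty_of_bounded hKne hLne hKc.isBounded hLc.isBounded)
  simp only
  linarith

lemma dist_halfWidth_le {K L : Set (Euc n)} (hKc : IsCompact K) (hLc : IsCompact L)
    (hKne : K.Nonempty) (hLne : L.Nonempty) {u : Euc n} (hu : ‖u‖ = 1) :
    dist (halfWidth K u) (halfWidth L u) ≤ hausdorffDist K L := by
  have hu' : ‖(-u : Euc n)‖ = 1 := by rwa [norm_neg]
  have h1 := suppFn_le_add hKc hLc hKne hLne hu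
  have h2 := suppFn_le_add hLc hKc hLne hKne hu
  have h3 := suppFn_le_add hKc hLc hKne hLne hu'
  have h4 := suppFn_le_add hLc hKc hLne hKne hu'
  rw [hausdorffDist_comm] at h2 h4
  rw [Real.dist_eq, abs_le, halfWidth, halfWidth]
  constructor <;> linarith

lemma halfWidth_pos {K : Set (Euc n)} (hK : IsConvexBody K) {u : Euc n} (hu : ‖u‖ = 1) :
    0 < halfWidth K u := by
  obtain ⟨hKc, -, h0⟩ := hK
  obtain ⟨ε, hε, hball⟩ := Metric.isOpen_iff.1 isOpen_interior 0 h0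
  have hsub : Metric.ball (0 : Euc n) ε ⊆ K := hball.trans interior_subset
  have key : ∀ v : Euc n, ‖v‖ = 1 → ε / 2 ≤ suppFn K v := by
    intro v hv
    have hm : (ε / 2) • v ∈ K := by
      apply hsub
      simp only [Metric.mem_ball, dist_zero_right, norm_smul, hv, mul_one,
        Real.norm_eq_abs, abs_of_pos (by linarith : (0:ℝ) < ε / 2)]
      linarith
    have h := le_suppFn_s6 hKc v hm
    rwa [real_inner_smul_right, real_inner_self_eq_norm_sq, hv, one_pow, mul_one] at h
  have h1 := key u hu
  have h2 := key (-u) (by rwa [norm_neg])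
  rw [halfWidth]
  linarith

end Aux

section OrliczAux

variable {m : ℕ} {φ : ℝ → ℝ}

/-- Membership set for the Orlicz sup. -/
private lemma orlicz_set_nonempty (hφ : IsOrliczPhi φ) (hm : 2 ≤ m) {b : Fin m → ℝ}
    (hb : ∀ j, 0 < b j) :
    ∃ lam : ℝ, 0 < lam ∧ lam ∈ {lam : ℝ | 0 < lam ∧ ∑ j, φ (b j / lam) ≤ 1} := by
  have : Nonempty (Fin m) := ⟨⟨0, by omega⟩⟩
  have hmpos : (0 : ℝ) < m := by exact_mod_cast (by omega : 0 < m)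
  -- find t₁ with φ t₁ ≤ 1/m
  have h : ∀ᶠ t in atTop, φ t < 1 / m :=
    hφ.tendsto_atTop.eventually_lt_const (one_div_pos.mpr hmpos)
  obtain ⟨t₀, ht₀⟩ := h.exists_forall_of_atTop
  set t₁ : ℝ := max t₀ 1 with ht₁def
  have ht₁pos : 0 < t₁ := lt_of_lt_of_le one_pos (le_max_right _ _)
  have hφt₁ : φ t₁ ≤ 1 / m := le_of_lt (ht₀ t₁ (le_max_left _ _))
  set c : ℝ := Finset.univ.inf' Finset.univ_nonempty b with hcdef
  have hcpos : 0 < c := by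
    rw [hcdef, Finset.lt_inf'_iff]
    exact fun j _ => hb j
  have hcle : ∀ j, c ≤ b j := fun j => Finset.inf'_le _ (Finset.mem_univ j)
  refine ⟨c / t₁, div_pos hcpos ht₁pos, div_pos hcpos ht₁pos, ?_⟩
  have hterm : ∀ j, φ (b j / (c / t₁)) ≤ 1 / m := by
    intro j
    have harg : t₁ ≤ b j / (c / t₁) := by
      rw [div_div_eq_mul_div, le_div_iff₀ hcpos]
      nlinarith [hcle j, ht₁pos]
    calc φ (b j / (c / t₁)) ≤ φ t₁ :=
          hφ.strictAntiOn.antitoneOn (Set.mem_Ioi.2 ht₁pos)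
            (Set.mem_Ioi.2 (lt_of_lt_of_le ht₁pos harg)) harg
      _ ≤ 1 / m := hφt₁
  calc ∑ j, φ (b j / (c / t₁)) ≤ ∑ _j : Fin m, (1 / m : ℝ) :=
        Finset.sum_le_sum fun j _ => hterm j
    _ = 1 := by
        rw [Finset.sum_const, Finset.card_univ, Fintype.card_fin, nsmul_eq_mul]
        field_simp

private lemma orlicz_set_bddAbove (hφ : IsOrliczPhi φ) (hm : 2 ≤ m) {b : Fin m → ℝ}
    (hb : ∀ j, 0 < b j) :
    ∀ lam ∈ {lam : ℝ | 0 < lam ∧ ∑ j, φ (b j / lam) ≤ 1},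
      lam ≤ Finset.univ.sup' (⟨⟨0, by omega⟩, Finset.mem_univ _⟩) b := by
  have : Nonempty (Fin m) := ⟨⟨0, by omega⟩⟩
  intro lam hlam
  obtain ⟨hlampos, hsum⟩ := hlam
  by_contra h
  push_neg at h
  have hlt : ∀ j, b j < lam := fun j =>
    lt_of_le_of_lt (Finset.le_sup' b (Finset.mem_univ j)) h
  have hterm : ∀ j, 1 < φ (b j / lam) := by
    intro j
    have h1 : b j / lam < 1 := (div_lt_one hlampos).2 (hlt j)
    have h2 : 0 < b j / lam := div_pos (hb j) hlampos
    rw [← hφ.one]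
    exact hφ.strictAntiOn (Set.mem_Ioi.2 h2) (Set.mem_Ioi.2 one_pos) h1
  have : (m : ℝ) ≤ ∑ j, φ (b j / lam) := by
    calc (m : ℝ) = ∑ _j : Fin m, (1 : ℝ) := by
          rw [Finset.sum_const, Finset.card_univ, Fintype.card_fin, nsmul_eq_mul, mul_one]
      _ ≤ ∑ j, φ (b j / lam) := Finset.sum_le_sum fun j _ => (hterm j).le
  have hm2 : (2 : ℝ) ≤ m := by exact_mod_cast hm
  linarith

lemma orliczWidthSum_pos (hφ : IsOrliczPhi φ) (hm : 2 ≤ m) {b : Fin m → ℝ}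
    (hb : ∀ j, 0 < b j) : 0 < orliczWidthSum φ b := by
  obtain ⟨lam, hpos, hmem⟩ := orlicz_set_nonempty hφ hm hb
  calc (0 : ℝ) < lam := hpos
    _ ≤ orliczWidthSum φ b :=
        le_csSup ⟨_, orlicz_set_bddAbove hφ hm hb⟩ hmem

lemma orliczWidthSum_mono (hφ : IsOrliczPhi φ) (hm : 2 ≤ m) {b b' : Fin m → ℝ}
    (hb : ∀ j, 0 < b j) (hle : ∀ j, b j ≤ b' j) :
    orliczWidthSum φ b ≤ orliczWidthSum φ b' := by
  have hb' : ∀ j, 0 < b' j := fun j => lt_of_lt_of_le (hb j) (hle j)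
  apply csSup_le_csSup ⟨_, orlicz_set_bddAbove hφ hm hb'⟩
  · obtain ⟨lam, hpos, hmem⟩ := orlicz_set_nonempty hφ hm hb
    exact ⟨lam, hmem⟩
  · rintro lam ⟨hpos, hsum⟩
    refine ⟨hpos, le_trans (Finset.sum_le_sum fun j _ => ?_) hsum⟩
    have h1 : (0:ℝ) < b j / lam := div_pos (hb j) hpos
    have h2 : b j / lam ≤ b' j / lam := by gcongr; exact hle j
    exact hφ.strictAntiOn.antitoneOn (Set.mem_Ioi.2 h1)
      (Set.mem_Ioi.2 (lt_of_lt_of_le h1 h2)) h2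

lemma orliczWidthSum_smul (hφ : IsOrliczPhi φ) (hm : 2 ≤ m) {b : Fin m → ℝ}
    (hb : ∀ j, 0 < b j) {c : ℝ} (hc : 0 < c) :
    orliczWidthSum φ (fun j => c * b j) = c * orliczWidthSum φ b := by
  have hcb : ∀ j, 0 < c * b j := fun j => mul_pos hc (hb j)
  have hiff : ∀ lam : ℝ, 0 < lam →
      ((∑ j, φ (c * b j / lam) ≤ 1) ↔ (∑ j, φ (b j / (lam / c)) ≤ 1)) := by
    intro lam hlam
    have : ∀ j, c * b j / lam = b j / (lam / c) := by
      intro j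
      field_simp
    simp_rw [this]
  apply le_antisymm
  · obtain ⟨lam₀, hpos₀, hmem₀⟩ := orlicz_set_nonempty hφ hm hcb
    apply csSup_le ⟨lam₀, hmem₀⟩
    rintro lam ⟨hpos, hsum⟩
    have hmem : lam / c ∈ {lam : ℝ | 0 < lam ∧ ∑ j, φ (b j / lam) ≤ 1} := by
      refine ⟨div_pos hpos hc, ?_⟩
      exact (hiff lam hpos).1 hsum
    have hle : lam / c ≤ orliczWidthSum φ b :=
      le_csSup ⟨_, orlicz_set_bddAbove hφ hm hb⟩ hmem
    calc lam = c * (lam / c) := by field_simp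
      _ ≤ c * orliczWidthSum φ b := mul_le_mul_of_nonneg_left hle hc.le
  · obtain ⟨lam₀, hpos₀, hmem₀⟩ := orlicz_set_nonempty hφ hm hb
    have h : orliczWidthSum φ b ≤ orliczWidthSum φ (fun j => c * b j) / c := by
      apply csSup_le ⟨lam₀, hmem₀⟩
      rintro lam ⟨hpos, hsum⟩
      have hmem : c * lam ∈ {lam : ℝ | 0 < lam ∧ ∑ j, φ ((fun j => c * b j) j / lam) ≤ 1} := by
        refine ⟨mul_pos hc hpos, ?_⟩
        simp only
        have heq : ∀ j, c * b j / (c * lam) = b j / lam := by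
          intro j; field_simp
        simp_rw [heq]
        exact hsum
      have hle : c * lam ≤ orliczWidthSum φ (fun j => c * b j) :=
        le_csSup ⟨_, orlicz_set_bddAbove hφ hm hcb⟩ hmem
      rw [le_div_iff₀ hc, mul_comm]
      exact hle
    calc c * orliczWidthSum φ b ≤ c * (orliczWidthSum φ (fun j => c * b j) / c) :=
          mul_le_mul_of_nonneg_left h hc.le
      _ = orliczWidthSum φ (fun j => c * b j) := by field_simp

end OrliczAux

/-- Continuity of the Orlicz width addition: if `K i j → K₀ j` in the Hausdorff
metric as `i → ∞` for each `j`, then the half-width functions of the Orlicz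
width additions converge pointwise on the sphere. -/
theorem orliczWidthSum_continuous {n : ℕ} (hn : 2 ≤ n) {m : ℕ} (hm : 2 ≤ m)
    (φ : ℝ → ℝ) (hφ : IsOrliczPhi φ)
    (K : ℕ → Fin m → Set (Euc n)) (K₀ : Fin m → Set (Euc n))
    (hK : ∀ i j, IsConvexBody (K i j)) (hK₀ : ∀ j, IsConvexBody (K₀ j))
    (hconv : ∀ j, Tendsto (fun i => Metric.hausdorffDist (K i j) (K₀ j)) atTop (nhds 0))
    (u : Euc n) (hu : ‖u‖ = 1) :
    Tendsto (fun i => orliczWidthSum φ (fun j => halfWidth (K i j) u)) atTop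
      (nhds (orliczWidthSum φ (fun j => halfWidth (K₀ j) u))) := by
  have hK₀ne : ∀ j, (K₀ j).Nonempty := fun j => ⟨0, interior_subset (hK₀ j).2.2⟩
  have hKne : ∀ i j, (K i j).Nonempty := fun i j => ⟨0, interior_subset (hK i j).2.2⟩
  set b₀ : Fin m → ℝ := fun j => halfWidth (K₀ j) u with hb₀def
  have hb₀pos : ∀ j, 0 < b₀ j := fun j => halfWidth_pos (hK₀ j) hu
  have hbpos : ∀ i j, 0 < halfWidth (K i j) u := fun i j => halfWidth_pos (hK i j) hu
  have hbconv : ∀ j, Tendsto (fun i => halfWidth (K i j) u) atTop (nhds (b₀ j)) := by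
    intro j
    rw [tendsto_iff_dist_tendsto_zero]
    refine squeeze_zero (fun i => dist_nonneg) (fun i => ?_) (hconv j)
    exact dist_halfWidth_le (hK i j).1 (hK₀ j).1 (hKne i j) (hK₀ne j) hu
  set F₀ : ℝ := orliczWidthSum φ b₀ with hF₀def
  have hF₀pos : 0 < F₀ := orliczWidthSum_pos hφ hm hb₀pos
  rw [Metric.tendsto_nhds]
  intro ε hε
  set θ : ℝ := min (1/2) (ε / (2 * F₀)) with hθdef
  have hθpos : 0 < θ := lt_min (by norm_num) (div_pos hε (by linarith))
  have hθhalf : θ ≤ 1/2 := min_le_left _ _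
  have hθF : θ * F₀ < ε := by
    have h1 : θ ≤ ε / (2 * F₀) := min_le_right _ _
    rw [le_div_iff₀ (by linarith : (0:ℝ) < 2 * F₀)] at h1
    nlinarith [mul_pos hθpos hF₀pos]
  have hev : ∀ᶠ i in atTop, ∀ j, dist (halfWidth (K i j) u) (b₀ j) < θ * b₀ j := by
    rw [eventually_all]
    intro j
    exact Metric.tendsto_nhds.1 (hbconv j) _ (mul_pos hθpos (hb₀pos j))
  filter_upwards [hev] with i hi
  have hlow : ∀ j, (1 - θ) * b₀ j ≤ halfWidth (K i j) u := by
    intro j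
    have h := hi j
    rw [Real.dist_eq, abs_lt] at h
    nlinarith [hb₀pos j]
  have hhigh : ∀ j, halfWidth (K i j) u ≤ (1 + θ) * b₀ j := by
    intro j
    have h := hi j
    rw [Real.dist_eq, abs_lt] at h
    nlinarith [hb₀pos j]
  have h1θpos : (0:ℝ) < 1 - θ := by linarith
  have hlowpos : ∀ j, 0 < (1 - θ) * b₀ j := fun j => mul_pos h1θpos (hb₀pos j)
  have hA : (1 - θ) * F₀ ≤ orliczWidthSum φ (fun j => halfWidth (K i j) u) := by
    rw [← orliczWidthSum_smul hφ hm hb₀pos h1θpos]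
    exact orliczWidthSum_mono hφ hm hlowpos hlow
  have hB : orliczWidthSum φ (fun j => halfWidth (K i j) u) ≤ (1 + θ) * F₀ := by
    rw [← orliczWidthSum_smul hφ hm hb₀pos (by linarith : (0:ℝ) < 1 + θ)]
    exact orliczWidthSum_mono hφ hm (fun j => hbpos i j) hhigh
  rw [Real.dist_eq, abs_lt]
  constructor <;> nlinarith

end
end

section
/- Let φ_1, φ_2 ∈ Φ, let K, L ∈ 𝒦ⁿ, and let i be an integer with 0 ≤ i < n. Then the limit lim_{ε→0⁺} (A_i(K +_φ ε·L) − A_i(K))/ε exists and A_{φ_2,i}(K,L) = ((φ_1)'_r(1)/(n−i)) · lim_{ε→0⁺} (A_i(K +_φ ε·L) − A_i(K))/ε, where (φ_1)'_r(1) denotes the right derivative of φ_1 at 1. -/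
open MeasureTheory Metric Filter Set
open scoped RealInnerProductSpace ENNReal

noncomputable section

/-- Half-width function of the Orlicz width linear combination `K +_φ ε·L`,
given the half widths `bK = b(K,u)`, `bL = b(L,u)`:
`sup {λ > 0 : φ₁(bK/λ) + ε φ₂(bL/λ) ≤ 1}`. -/
def orliczComb (φ₁ φ₂ : ℝ → ℝ) (ε bK bL : ℝ) : ℝ :=
  sSup {lam : ℝ | 0 < lam ∧ φ₁ (bK / lam) + ε * φ₂ (bL / lam) ≤ 1}
/-- Orlicz mixed width integral
`A_{φ,i}(K,L) = (1/n) ∫ φ(b(L,u)/b(K,u)) b(K,u)^{n-i} dS(u)`. -/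
def orliczMixedWidthIntegral (n i : ℕ) (φ : ℝ → ℝ) (K L : Set (Euc n)) : ℝ :=
  (1 / (n : ℝ)) * ∫ u : sphere (0 : Euc n) 1,
    φ (halfWidth L (u : Euc n) / halfWidth K (u : Euc n)) *
      halfWidth K (u : Euc n) ^ ((n : ℝ) - i) ∂(sphMeasure n)

/-- `A_i(K +_φ ε·L) = (1/n) ∫ b(K +_φ ε·L, u)^{n-i} dS(u)`. -/
def orliczCombWidthIntegral (n i : ℕ) (φ₁ φ₂ : ℝ → ℝ) (ε : ℝ) (K L : Set (Euc n)) : ℝ :=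
  (1 / (n : ℝ)) * ∫ u : sphere (0 : Euc n) 1,
    orliczComb φ₁ φ₂ ε (halfWidth K (u : Euc n)) (halfWidth L (u : Euc n)) ^
      ((n : ℝ) - i) ∂(sphMeasure n)

section PhiFacts

variable {φ : ℝ → ℝ}

lemma IsOrliczPhi.contOn (hφ : IsOrliczPhi φ) : ContinuousOn φ (Set.Ioi 0) :=
  hφ.convexOn.continuousOn isOpen_Ioi

lemma IsOrliczPhi.contAt (hφ : IsOrliczPhi φ) {x : ℝ} (hx : 0 < x) : ContinuousAt φ x :=
  hφ.contOn.continuousAt (isOpen_Ioi.mem_nhds hx)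

lemma IsOrliczPhi.slopeMono (hφ : IsOrliczPhi φ) : MonotoneOn (slope φ 1) (Set.Ioi 1) := by
  have h := hφ.convexOn.slope_mono (x := 1) (by norm_num : (1:ℝ) ∈ Set.Ioi 0)
  exact h.mono fun t ht => ⟨mem_Ioi.mpr (lt_trans one_pos (mem_Ioi.mp ht)), by simp [ne_of_gt (mem_Ioi.mp ht)]⟩

/-- For `1 < t ≤ 2`, `1 - φ t ≥ (1 - φ 2) * (t - 1)`. -/
lemma IsOrliczPhi.lower_slope (hφ : IsOrliczPhi φ) {t : ℝ} (ht1 : 1 < t) (ht2 : t ≤ 2) :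
    (1 - φ 2) * (t - 1) ≤ 1 - φ t := by
  have h := hφ.slopeMono ht1 (by norm_num : (2:ℝ) ∈ Set.Ioi 1) ht2
  rw [slope_def_field, slope_def_field, hφ.one] at h
  have ht : 0 < t - 1 := by linarith
  rw [div_le_div_iff₀ ht (by norm_num)] at h
  nlinarith

lemma IsOrliczPhi.phi_two_lt_one (hφ : IsOrliczPhi φ) : φ 2 < 1 := by
  have := hφ.strictAntiOn (by norm_num : (1:ℝ) ∈ Set.Ioi 0)
    (by norm_num : (2:ℝ) ∈ Set.Ioi 0) one_lt_two
  rwa [hφ.one] at this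

/-- Existence of the right derivative of `φ` at `1`, with `d < 0`. -/
lemma IsOrliczPhi.exists_rightDeriv (hφ : IsOrliczPhi φ) :
    ∃ d : ℝ, d < 0 ∧ HasDerivWithinAt φ d (Set.Ici 1) 1 ∧
      Tendsto (slope φ 1) (nhdsWithin 1 (Set.Ioi 1)) (nhds d) := by
  have hbdd : BddBelow (slope φ 1 '' Set.Ioi 1) := by
    refine ⟨slope φ 1 (1/2), ?_⟩
    rintro z ⟨t, ht, rfl⟩
    have h := hφ.convexOn.slope_mono (x := 1) (by norm_num : (1:ℝ) ∈ Set.Ioi 0)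
    exact h (by norm_num) ⟨mem_Ioi.mpr (lt_trans one_pos (mem_Ioi.mp ht)), by simp [ne_of_gt (mem_Ioi.mp ht)]⟩ (by linarith [mem_Ioi.mp ht])
  set d := sInf (slope φ 1 '' Set.Ioi 1) with hd
  have htend : Tendsto (slope φ 1) (nhdsWithin 1 (Set.Ioi 1)) (nhds d) :=
    MonotoneOn.tendsto_nhdsGT hφ.slopeMono hbdd
  have hdlt : d < 0 := by
    have h2 : slope φ 1 2 ∈ slope φ 1 '' Set.Ioi 1 :=
      ⟨2, by norm_num, rfl⟩
    have : d ≤ slope φ 1 2 := csInf_le hbdd h2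
    have h2' : slope φ 1 2 = φ 2 - 1 := by
      rw [slope_def_field, hφ.one]; norm_num
    have := hφ.phi_two_lt_one
    linarith [h2' ▸ ‹d ≤ slope φ 1 2›]
  refine ⟨d, hdlt, ?_, htend⟩
  rw [hasDerivWithinAt_iff_tendsto_slope, Set.Ici_sdiff_left]
  exact htend

end PhiFacts

/-- Mean value bound for `rpow`. -/
lemma rpow_sub_rpow_le {q x y M : ℝ} (hq : 1 ≤ q) (hx : 0 < x) (hxy : x ≤ y) (hyM : y ≤ M) :
    y ^ q - x ^ q ≤ q * M ^ (q - 1) * (y - x) := by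
  rcases eq_or_lt_of_le hxy with rfl | hlt
  · simp
  have hderiv : ∀ z ∈ Set.Ioo x y, HasDerivAt (fun w : ℝ => w ^ q) (q * z ^ (q - 1)) z :=
    fun z _ => Real.hasDerivAt_rpow_const (Or.inr hq)
  have hcont : ContinuousOn (fun w : ℝ => w ^ q) (Set.Icc x y) :=
    (Real.continuous_rpow_const (by linarith)).continuousOn
  obtain ⟨c, hc, hceq⟩ := exists_hasDerivAt_eq_slope (fun w : ℝ => w ^ q)
    (fun z => q * z ^ (q - 1)) hlt hcont hderiv
  have hcM : c ^ (q - 1) ≤ M ^ (q - 1) :=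
    Real.rpow_le_rpow (le_of_lt (hx.trans hc.1)) (hc.2.le.trans hyM) (by linarith)
  have : (y ^ q - x ^ q) / (y - x) ≤ q * M ^ (q - 1) := by
    rw [← hceq]
    exact mul_le_mul_of_nonneg_left hcM (by linarith)
  calc y ^ q - x ^ q = (y ^ q - x ^ q) / (y - x) * (y - x) := by
        rw [div_mul_cancel₀ _ (sub_ne_zero.mpr hlt.ne')]
    _ ≤ q * M ^ (q - 1) * (y - x) := by
        apply mul_le_mul_of_nonneg_right this (by linarith)
section Body

variable {n : ℕ} {K : Set (Euc n)}

lemma IsConvexBody.nonempty (hK : IsConvexBody K) : K.Nonempty :=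
  ⟨0, interior_subset hK.2.2⟩

lemma IsConvexBody.bound (hK : IsConvexBody K) : ∃ R : ℝ, 0 < R ∧ ∀ k ∈ K, ‖k‖ ≤ R := by
  obtain ⟨R0, hR0⟩ := hK.1.isBounded.exists_norm_le
  exact ⟨max R0 1, lt_of_lt_of_le one_pos (le_max_right _ _),
    fun k hk => (hR0 k hk).trans (le_max_left _ _)⟩

lemma bddAbove_inner_image {R : ℝ} (hR : ∀ k ∈ K, ‖k‖ ≤ R) (x : Euc n) :
    BddAbove ((fun y => ⟪x, y⟫) '' K) := by
  refine ⟨‖x‖ * R, ?_⟩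
  rintro z ⟨k, hk, rfl⟩
  exact (real_inner_le_norm x k).trans
    (mul_le_mul_of_nonneg_left (hR k hk) (norm_nonneg x))

lemma suppFn_le_of_bound {R : ℝ} (hne : K.Nonempty) (hR : ∀ k ∈ K, ‖k‖ ≤ R) (x : Euc n) :
    suppFn K x ≤ ‖x‖ * R := by
  apply csSup_le (hne.image _)
  rintro z ⟨k, hk, rfl⟩
  exact (real_inner_le_norm x k).trans
    (mul_le_mul_of_nonneg_left (hR k hk) (norm_nonneg x))

lemma le_suppFn_s10 {R : ℝ} (hR : ∀ k ∈ K, ‖k‖ ≤ R) {k : Euc n} (hk : k ∈ K) (x : Euc n) :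
    ⟪x, k⟫ ≤ suppFn K x :=
  le_csSup (bddAbove_inner_image hR x) ⟨k, hk, rfl⟩

lemma suppFn_continuous (hK : IsConvexBody K) : Continuous (suppFn K) := by
  obtain ⟨R, hR0, hR⟩ := hK.bound
  have key : ∀ x y : Euc n, suppFn K x ≤ suppFn K y + ‖x - y‖ * R := by
    intro x y
    apply csSup_le (hK.nonempty.image _)
    rintro z ⟨k, hk, rfl⟩
    have h1 : ⟪y, k⟫ ≤ suppFn K y := le_suppFn_s10 hR hk y
    have h2 : ⟪x - y, k⟫ ≤ ‖x - y‖ * R :=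
      (real_inner_le_norm _ _).trans
        (mul_le_mul_of_nonneg_left (hR k hk) (norm_nonneg _))
    have h3 : ⟪x - y, k⟫ = ⟪x, k⟫ - ⟪y, k⟫ := inner_sub_left x y k
    linarith
  have hlip : LipschitzWith (Real.toNNReal R) (suppFn K) := by
    apply LipschitzWith.of_dist_le_mul
    intro x y
    rw [Real.dist_eq, abs_sub_le_iff]
    have hxy := key x y
    have hyx := key y x
    rw [dist_eq_norm]
    rw [Real.coe_toNNReal R hR0.le]
    constructor
    · linarith
    · rw [norm_sub_rev y x] at hyx; linarith
  exact hlip.continuous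

lemma halfWidth_continuous (hK : IsConvexBody K) : Continuous (halfWidth K) := by
  have h := suppFn_continuous hK
  exact ((h.add (h.comp continuous_neg)).div_const 2)

lemma IsConvexBody.halfWidth_bounds (hK : IsConvexBody K) :
    ∃ r R : ℝ, 0 < r ∧ 0 < R ∧
      ∀ u : Euc n, ‖u‖ = 1 → r ≤ halfWidth K u ∧ halfWidth K u ≤ R := by
  obtain ⟨R, hR0, hR⟩ := hK.bound
  obtain ⟨r, hr0, hrball⟩ : ∃ r > 0, ball (0 : Euc n) r ⊆ K := by
    obtain ⟨r, hr0, hrball⟩ := Metric.mem_nhds_iff.mp (mem_interior_iff_mem_nhds.mp hK.2.2)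
    exact ⟨r, hr0, hrball⟩
  refine ⟨r / 2, R, by linarith, hR0, fun u hu => ⟨?_, ?_⟩⟩
  · have hmem : ∀ v : Euc n, ‖v‖ = 1 → (r / 2) • v ∈ K := by
      intro v hv
      apply hrball
      simp only [mem_ball, dist_zero_right, norm_smul, hv, mul_one]
      rw [Real.norm_eq_abs, abs_of_pos (by linarith)]
      linarith
    have h1 : (r / 2 : ℝ) ≤ suppFn K u := by
      have := le_suppFn_s10 hR (hmem u hu) u
      rwa [real_inner_smul_right, real_inner_self_eq_norm_sq, hu, one_pow, mul_one] at this
    have h2 : (r / 2 : ℝ) ≤ suppFn K (-u) := by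
      have hu' : ‖(-u : Euc n)‖ = 1 := by rwa [norm_neg]
      have := le_suppFn_s10 hR (hmem (-u) hu') (-u)
      rwa [real_inner_smul_right, real_inner_self_eq_norm_sq, hu', one_pow, mul_one] at this
    unfold halfWidth; linarith
  · have h1 := suppFn_le_of_bound hK.nonempty hR u
    have h2 := suppFn_le_of_bound hK.nonempty hR (-u)
    rw [hu, one_mul] at h1
    rw [norm_neg, hu, one_mul] at h2
    unfold halfWidth; linarith

end Body
section Comb

variable {φ₁ φ₂ : ℝ → ℝ} {a b ε : ℝ}

lemma combF_strictMono (hφ₁ : IsOrliczPhi φ₁) (hφ₂ : IsOrliczPhi φ₂)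
    (ha : 0 < a) (hb : 0 < b) (hε : 0 < ε) :
    StrictMonoOn (fun lam : ℝ => φ₁ (a / lam) + ε * φ₂ (b / lam)) (Set.Ioi 0) := by
  intro l1 h1 l2 h2 hlt
  have h1' : (0:ℝ) < l1 := h1
  have h2' : (0:ℝ) < l2 := h2
  have ha2 : a / l2 < a / l1 := by
    rw [div_lt_div_iff₀ h2' h1']; nlinarith
  have hb2 : b / l2 ≤ b / l1 := le_of_lt (by rw [div_lt_div_iff₀ h2' h1']; nlinarith)
  have hA : φ₁ (a / l1) < φ₁ (a / l2) :=
    hφ₁.strictAntiOn (div_pos ha h2') (div_pos ha h1') ha2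
  have hB : φ₂ (b / l1) ≤ φ₂ (b / l2) :=
    hφ₂.strictAntiOn.antitoneOn (div_pos hb h2') (div_pos hb h1') hb2
  have := mul_le_mul_of_nonneg_left hB hε.le
  dsimp only
  linarith

lemma combF_contOn (hφ₁ : IsOrliczPhi φ₁) (hφ₂ : IsOrliczPhi φ₂)
    (ha : 0 < a) (hb : 0 < b) :
    ContinuousOn (fun lam : ℝ => φ₁ (a / lam) + ε * φ₂ (b / lam)) (Set.Ioi 0) := by
  have hdiv : ∀ c : ℝ, ContinuousOn (fun lam : ℝ => c / lam) (Set.Ioi 0) :=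
    fun c => continuousOn_const.div continuousOn_id (fun x hx => ne_of_gt hx)
  have h1 : ContinuousOn (fun lam : ℝ => φ₁ (a / lam)) (Set.Ioi 0) :=
    hφ₁.contOn.comp (hdiv a) (fun x hx => div_pos ha hx)
  have h2 : ContinuousOn (fun lam : ℝ => φ₂ (b / lam)) (Set.Ioi 0) :=
    hφ₂.contOn.comp (hdiv b) (fun x hx => div_pos hb hx)
  exact h1.add (continuousOn_const.mul h2)

/-- The Orlicz combination is the unique root of
`φ₁ (a/λ) + ε φ₂ (b/λ) = 1`, and lies in `(0, a)`. -/
lemma orliczComb_spec (hφ₁ : IsOrliczPhi φ₁) (hφ₂ : IsOrliczPhi φ₂)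
    (ha : 0 < a) (hb : 0 < b) (hε : 0 < ε) :
    0 < orliczComb φ₁ φ₂ ε a b ∧ orliczComb φ₁ φ₂ ε a b < a ∧
      φ₁ (a / orliczComb φ₁ φ₂ ε a b) + ε * φ₂ (b / orliczComb φ₁ φ₂ ε a b) = 1 := by
  set F := fun lam : ℝ => φ₁ (a / lam) + ε * φ₂ (b / lam) with hF
  have hmono := combF_strictMono hφ₁ hφ₂ ha hb hε
  have hFa : 1 < F a := by
    have : a / a = 1 := div_self ha.ne'
    simp only [hF, this, hφ₁.one]
    nlinarith [hφ₂.pos (b / a) (div_pos hb ha)]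
  -- find a small point where F < 1
  have hatop : ∀ c : ℝ, 0 < c → Tendsto (fun lam : ℝ => c / lam) (nhdsWithin 0 (Set.Ioi 0)) atTop := by
    intro c hc
    have := Tendsto.const_mul_atTop hc tendsto_inv_nhdsGT_zero
    simpa [div_eq_mul_inv] using this
  have hF0 : Tendsto F (nhdsWithin 0 (Set.Ioi 0)) (nhds 0) := by
    have h1 : Tendsto (fun lam : ℝ => φ₁ (a / lam)) (nhdsWithin 0 (Set.Ioi 0)) (nhds 0) :=
      hφ₁.tendsto_atTop.comp (hatop a ha)
    have h2 : Tendsto (fun lam : ℝ => φ₂ (b / lam)) (nhdsWithin 0 (Set.Ioi 0)) (nhds 0) :=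
      hφ₂.tendsto_atTop.comp (hatop b hb)
    have := h1.add (h2.const_mul ε)
    simpa using this
  have hev : ∀ᶠ lam in nhdsWithin 0 (Set.Ioi 0), F lam < 1 ∧ 0 < lam ∧ lam < a := by
    refine (hF0.eventually_lt_const one_pos).and (Filter.Eventually.and ?_ ?_)
    · exact eventually_mem_nhdsWithin
    · exact Filter.Eventually.filter_mono nhdsWithin_le_nhds (Filter.Tendsto.eventually_lt_const ha tendsto_id)
  obtain ⟨x₀, hFx₀, hx₀0, hx₀a⟩ := hev.exists
  -- IVT
  have hIcc : Set.Icc x₀ a ⊆ Set.Ioi 0 := fun x hx => lt_of_lt_of_le hx₀0 hx.1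
  have hivt := intermediate_value_Icc (f := F) hx₀a.le (((combF_contOn (ε := ε) hφ₁ hφ₂ ha hb)).mono hIcc)
  obtain ⟨lam, hlamIcc, hlamEq⟩ := hivt ⟨hFx₀.le, hFa.le⟩
  have hlam0 : 0 < lam := lt_of_lt_of_le hx₀0 hlamIcc.1
  have hlama : lam < a := by
    rcases lt_or_eq_of_le hlamIcc.2 with h | h
    · exact h
    · exfalso; rw [h] at hlamEq; rw [hlamEq] at hFa; exact lt_irrefl 1 hFa
  have heq' : φ₁ (a / lam) + ε * φ₂ (b / lam) = 1 := hlamEq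
  -- identify the sSup
  have hset : {l : ℝ | 0 < l ∧ φ₁ (a / l) + ε * φ₂ (b / l) ≤ 1} = Set.Ioc 0 lam := by
    ext x
    constructor
    · rintro ⟨hx0, hxF⟩
      refine ⟨hx0, ?_⟩
      by_contra h
      push_neg at h
      have := hmono hlam0 hx0 h
      dsimp only at this
      rw [heq'] at this
      exact absurd hxF this.not_ge
    · rintro ⟨hx0, hxlam⟩
      refine ⟨hx0, ?_⟩
      have := hmono.monotoneOn hx0 hlam0 hxlam
      exact le_trans this (le_of_eq heq')
  have hsup : orliczComb φ₁ φ₂ ε a b = lam := by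
    rw [orliczComb, hset, csSup_Ioc hlam0]
  rw [hsup]
  exact ⟨hlam0, hlama, heq'⟩

lemma orliczComb_lt_iff (hφ₁ : IsOrliczPhi φ₁) (hφ₂ : IsOrliczPhi φ₂)
    (ha : 0 < a) (hb : 0 < b) (hε : 0 < ε) {x : ℝ} (hx : 0 < x) :
    orliczComb φ₁ φ₂ ε a b < x ↔ 1 < φ₁ (a / x) + ε * φ₂ (b / x) := by
  obtain ⟨h0, hlta, heq⟩ := orliczComb_spec hφ₁ hφ₂ ha hb hε
  have hmono := combF_strictMono hφ₁ hφ₂ ha hb hε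
  constructor
  · intro h
    have := hmono h0 hx h
    dsimp only at this
    rwa [heq] at this
  · intro h
    by_contra hc
    push_neg at hc
    have := hmono.monotoneOn hx h0 hc
    exact absurd (le_trans this (le_of_eq heq)) h.not_ge

end Comb
section Quant

variable {φ₁ φ₂ : ℝ → ℝ} {a b ε : ℝ}

/-- Quantitative bound: `a - comb ≤ a * (ε φ₂(b/a)) / (1 - φ₁ 2)` when `ε φ₂(b/a) < 1 - φ₁ 2`. -/
lemma orliczComb_dist_le (hφ₁ : IsOrliczPhi φ₁) (hφ₂ : IsOrliczPhi φ₂)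
    (ha : 0 < a) (hb : 0 < b) (hε : 0 < ε)
    (hsmall : ε * φ₂ (b / a) < 1 - φ₁ 2) :
    a - orliczComb φ₁ φ₂ ε a b ≤ a * (ε * φ₂ (b / a)) / (1 - φ₁ 2) := by
  obtain ⟨hlam0, hlama, heq⟩ := orliczComb_spec hφ₁ hφ₂ ha hb hε
  set lam := orliczComb φ₁ φ₂ ε a b with hlam
  have hc : 0 < 1 - φ₁ 2 := by linarith [hφ₁.phi_two_lt_one]
  have ht1 : 1 < a / lam := (one_lt_div hlam0).mpr hlama
  have hA : φ₂ (b / lam) ≤ φ₂ (b / a) := by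
    apply hφ₂.strictAntiOn.antitoneOn (div_pos hb ha) (div_pos hb hlam0)
    rw [div_le_div_iff₀ ha hlam0]; nlinarith
  have h2 : 1 - φ₁ (a / lam) ≤ ε * φ₂ (b / a) := by nlinarith
  have ht2 : a / lam ≤ 2 := by
    by_contra h
    push_neg at h
    have := hφ₁.strictAntiOn.antitoneOn (by norm_num : (2:ℝ) ∈ Set.Ioi 0)
      (mem_Ioi.mpr (by positivity)) h.le
    linarith
  have h3 := hφ₁.lower_slope ht1 ht2
  have ht : a / lam - 1 ≤ ε * φ₂ (b / a) / (1 - φ₁ 2) := by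
    rw [le_div_iff₀ hc]; nlinarith
  calc a - lam = lam * (a / lam - 1) := by field_simp
    _ ≤ a * (a / lam - 1) := mul_le_mul_of_nonneg_right hlama.le (by linarith)
    _ ≤ a * (ε * φ₂ (b / a) / (1 - φ₁ 2)) := mul_le_mul_of_nonneg_left ht ha.le
    _ = a * (ε * φ₂ (b / a)) / (1 - φ₁ 2) := by ring

lemma eventually_small (hφ₂ : IsOrliczPhi φ₂) (hc : 0 < (1:ℝ) - φ₁ 2) (ha : 0 < a) (hb : 0 < b) :
    ∀ᶠ ε in nhdsWithin 0 (Set.Ioi 0), ε * φ₂ (b / a) < 1 - φ₁ 2 := by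
  have hφ2pos := hφ₂.pos _ (div_pos hb ha)
  have : ∀ᶠ ε in nhds (0:ℝ), ε * φ₂ (b / a) < 1 - φ₁ 2 := by
    have hcont : Continuous (fun ε : ℝ => ε * φ₂ (b / a)) := continuous_id.mul continuous_const
    have h1 : Tendsto (fun ε : ℝ => ε * φ₂ (b / a)) (nhds 0) (nhds 0) := by
      have := hcont.tendsto 0
      simpa using this
    exact h1.eventually_lt_const hc
  exact this.filter_mono nhdsWithin_le_nhds

lemma orliczComb_tendsto (hφ₁ : IsOrliczPhi φ₁) (hφ₂ : IsOrliczPhi φ₂)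
    (ha : 0 < a) (hb : 0 < b) :
    Tendsto (fun ε => orliczComb φ₁ φ₂ ε a b) (nhdsWithin 0 (Set.Ioi 0)) (nhds a) := by
  have hc : 0 < 1 - φ₁ 2 := by linarith [hφ₁.phi_two_lt_one]
  have hlow : Tendsto (fun ε : ℝ => a - a * (ε * φ₂ (b / a)) / (1 - φ₁ 2))
      (nhdsWithin 0 (Set.Ioi 0)) (nhds a) := by
    have hcont : Continuous (fun ε : ℝ => a - a * (ε * φ₂ (b / a)) / (1 - φ₁ 2)) := by
      continuity
    have h2 := (hcont.tendsto 0).mono_left (nhdsWithin_le_nhds (s := Set.Ioi (0:ℝ)))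
    simpa using h2
  apply tendsto_of_tendsto_of_tendsto_of_le_of_le' hlow tendsto_const_nhds
  · filter_upwards [eventually_small hφ₂ hc ha hb, eventually_mem_nhdsWithin] with ε hsm hε
    have := orliczComb_dist_le hφ₁ hφ₂ ha hb hε hsm
    linarith
  · filter_upwards [eventually_mem_nhdsWithin] with ε hε
    exact (orliczComb_spec hφ₁ hφ₂ ha hb hε).2.1.le

/-- Pointwise first-order expansion of `(comb ε)^q`. -/
lemma orliczComb_pow_tendsto (hφ₁ : IsOrliczPhi φ₁) (hφ₂ : IsOrliczPhi φ₂)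
    {d : ℝ} (hd : d < 0)
    (hslope : Tendsto (slope φ₁ 1) (nhdsWithin 1 (Set.Ioi 1)) (nhds d))
    (ha : 0 < a) (hb : 0 < b) {q : ℝ} (hq : 1 ≤ q) :
    Tendsto (fun ε => ((orliczComb φ₁ φ₂ ε a b) ^ q - a ^ q) / ε)
      (nhdsWithin 0 (Set.Ioi 0)) (nhds (q * a ^ q * φ₂ (b / a) / d)) := by
  set lam := fun ε => orliczComb φ₁ φ₂ ε a b with hlamdef
  have hlam : Tendsto lam (nhdsWithin 0 (Set.Ioi 0)) (nhds a) :=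
    orliczComb_tendsto hφ₁ hφ₂ ha hb
  -- t ε = a / lam ε tends to 1 within Ioi 1
  have htnh : Tendsto (fun ε => a / lam ε) (nhdsWithin 0 (Set.Ioi 0)) (nhds 1) := by
    have h := (tendsto_const_nhds (x := a)).div hlam ha.ne'
    rwa [div_self ha.ne'] at h
  have ht : Tendsto (fun ε => a / lam ε) (nhdsWithin 0 (Set.Ioi 0))
      (nhdsWithin 1 (Set.Ioi 1)) := by
    rw [tendsto_nhdsWithin_iff]
    refine ⟨htnh, ?_⟩
    filter_upwards [eventually_mem_nhdsWithin] with ε hε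
    obtain ⟨h0, h1, _⟩ := orliczComb_spec hφ₁ hφ₂ ha hb hε
    exact (one_lt_div h0).mpr h1
  have hslope_comp : Tendsto (fun ε => slope φ₁ 1 (a / lam ε))
      (nhdsWithin 0 (Set.Ioi 0)) (nhds d) := hslope.comp ht
  have hblam : Tendsto (fun ε => b / lam ε) (nhdsWithin 0 (Set.Ioi 0)) (nhds (b / a)) :=
    (tendsto_const_nhds (x := b)).div hlam ha.ne'
  have hphi2 : Tendsto (fun ε => φ₂ (b / lam ε)) (nhdsWithin 0 (Set.Ioi 0))
      (nhds (φ₂ (b / a))) := ((hφ₂.contAt (div_pos hb ha)).tendsto).comp hblam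
  -- (t ε - 1)/ε → -φ₂(b/a)/d
  have hquot : Tendsto (fun ε => (a / lam ε - 1) / ε) (nhdsWithin 0 (Set.Ioi 0))
      (nhds (-φ₂ (b / a) / d)) := by
    have h := (hphi2.neg).div hslope_comp hd.ne
    apply h.congr'
    filter_upwards [eventually_mem_nhdsWithin] with ε hε
    obtain ⟨h0, h1, heq⟩ := orliczComb_spec hφ₁ hφ₂ ha hb hε
    have ht1 : 1 < a / lam ε := (one_lt_div h0).mpr h1
    have hφ2pos : 0 < φ₂ (b / lam ε) := hφ₂.pos _ (div_pos hb h0)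
    have hsl : slope φ₁ 1 (a / lam ε) = -(ε * φ₂ (b / lam ε)) / (a / lam ε - 1) := by
      rw [slope_def_field, hφ₁.one]
      congr 1
      linarith
    simp only [Pi.div_apply]
    rw [hsl]
    have hne1 : a / lam ε - 1 ≠ 0 := by linarith
    have hne2 : ε ≠ 0 := (mem_Ioi.mp hε).ne'
    field_simp
  -- (lam ε - a)/ε → a φ₂(b/a)/d
  have hlin : Tendsto (fun ε => (lam ε - a) / ε) (nhdsWithin 0 (Set.Ioi 0))
      (nhds (a * φ₂ (b / a) / d)) := by
    have hA : Tendsto (fun ε => -(a / (a / lam ε))) (nhdsWithin 0 (Set.Ioi 0))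
        (nhds (-(a / 1))) := ((tendsto_const_nhds (x := a)).div htnh one_ne_zero).neg
    have h := hA.mul hquot
    have e : -(a / 1) * (-φ₂ (b / a) / d) = a * φ₂ (b / a) / d := by
      field_simp
    rw [e] at h
    apply h.congr'
    filter_upwards [eventually_mem_nhdsWithin] with ε hε
    obtain ⟨h0, h1, _⟩ := orliczComb_spec hφ₁ hφ₂ ha hb hε
    have hne2 : ε ≠ 0 := (mem_Ioi.mp hε).ne'
    have hl0 : lam ε ≠ 0 := h0.ne'
    field_simp
    ring
  -- compose with rpow slope
  have hrpow : Tendsto (slope (fun x : ℝ => x ^ q) a) (nhdsWithin a {a}ᶜ)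
      (nhds (q * a ^ (q - 1))) :=
    hasDerivAt_iff_tendsto_slope.mp (Real.hasDerivAt_rpow_const (Or.inl ha.ne'))
  have hlamne : Tendsto lam (nhdsWithin 0 (Set.Ioi 0)) (nhdsWithin a {a}ᶜ) := by
    rw [tendsto_nhdsWithin_iff]
    refine ⟨hlam, ?_⟩
    filter_upwards [eventually_mem_nhdsWithin] with ε hε
    exact (orliczComb_spec hφ₁ hφ₂ ha hb hε).2.1.ne
  have hslope_rpow : Tendsto (fun ε => slope (fun x : ℝ => x ^ q) a (lam ε))
      (nhdsWithin 0 (Set.Ioi 0)) (nhds (q * a ^ (q - 1))) := hrpow.comp hlamne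
  have h := hslope_rpow.mul hlin
  have e2 : q * a ^ (q - 1) * (a * φ₂ (b / a) / d) = q * a ^ q * φ₂ (b / a) / d := by
    rw [show a ^ q = a ^ (q - 1) * a by rw [← Real.rpow_add_one ha.ne' (q-1), sub_add_cancel]]
    ring
  rw [e2] at h
  apply h.congr'
  filter_upwards [eventually_mem_nhdsWithin] with ε hε
  obtain ⟨h0, h1, _⟩ := orliczComb_spec hφ₁ hφ₂ ha hb hε
  have hne : lam ε - a ≠ 0 := sub_ne_zero.mpr h1.ne
  have hne2 : ε ≠ 0 := (mem_Ioi.mp hε).ne'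
  rw [slope_def_field]
  field_simp
  rfl

end Quant
section Main

lemma measurable_orliczComb_sphere {n : ℕ} {φ₁ φ₂ : ℝ → ℝ}
    (hφ₁ : IsOrliczPhi φ₁) (hφ₂ : IsOrliczPhi φ₂)
    {K L : Set (Euc n)} (hK : IsConvexBody K) (hL : IsConvexBody L)
    (hKpos : ∀ u : sphere (0 : Euc n) 1, 0 < halfWidth K (u : Euc n))
    (hLpos : ∀ u : sphere (0 : Euc n) 1, 0 < halfWidth L (u : Euc n))
    {ε : ℝ} (hε : 0 < ε) :
    Measurable (fun u : sphere (0 : Euc n) 1 =>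
      orliczComb φ₁ φ₂ ε (halfWidth K (u : Euc n)) (halfWidth L (u : Euc n))) := by
  apply measurable_of_Iio
  intro x
  rcases le_or_gt x 0 with hx | hx
  · have hempty : (fun u : sphere (0 : Euc n) 1 =>
        orliczComb φ₁ φ₂ ε (halfWidth K (u : Euc n)) (halfWidth L (u : Euc n))) ⁻¹'
          Set.Iio x = ∅ := by
      ext u
      simp only [Set.mem_preimage, Set.mem_Iio, Set.mem_empty_iff_false, iff_false, not_lt]
      have := (orliczComb_spec hφ₁ hφ₂ (hKpos u) (hLpos u) hε).1
      linarith
    rw [hempty]; exact MeasurableSet.empty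
  · have hset : (fun u : sphere (0 : Euc n) 1 =>
        orliczComb φ₁ φ₂ ε (halfWidth K (u : Euc n)) (halfWidth L (u : Euc n))) ⁻¹'
          Set.Iio x =
        (fun u : sphere (0 : Euc n) 1 =>
          φ₁ (halfWidth K (u : Euc n) / x) + ε * φ₂ (halfWidth L (u : Euc n) / x)) ⁻¹'
          Set.Ioi 1 := by
      ext u
      simp only [Set.mem_preimage, Set.mem_Iio, Set.mem_Ioi]
      exact orliczComb_lt_iff hφ₁ hφ₂ (hKpos u) (hLpos u) hε hx
    rw [hset]
    have hcK : Continuous (fun u : sphere (0 : Euc n) 1 => halfWidth K (u : Euc n)) :=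
      (halfWidth_continuous hK).comp continuous_subtype_val
    have hcL : Continuous (fun u : sphere (0 : Euc n) 1 => halfWidth L (u : Euc n)) :=
      (halfWidth_continuous hL).comp continuous_subtype_val
    have h1 : Continuous (fun u : sphere (0 : Euc n) 1 => φ₁ (halfWidth K (u : Euc n) / x)) :=
      hφ₁.contOn.comp_continuous (hcK.div_const x)
        (fun u => mem_Ioi.mpr (div_pos (hKpos u) hx))
    have h2 : Continuous (fun u : sphere (0 : Euc n) 1 => φ₂ (halfWidth L (u : Euc n) / x)) :=
      hφ₂.contOn.comp_continuous (hcL.div_const x)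
        (fun u => mem_Ioi.mpr (div_pos (hLpos u) hx))
    exact (isOpen_Ioi.preimage (h1.add (continuous_const.mul h2))).measurableSet

end Main
/-- First-order Orlicz variation of the width integrals: the limit
`lim_{ε→0⁺} (A_i(K +_φ ε·L) − A_i(K))/ε` exists, and
`A_{φ₂,i}(K,L) = ((φ₁)'_r(1)/(n-i)) · lim`, where `(φ₁)'_r(1)` is the right
derivative of `φ₁` at `1`. -/
theorem orliczMixedWidthIntegral_eq_deriv {n : ℕ} (hn : 2 ≤ n) (i : ℕ) (hi : i < n)
    (φ₁ φ₂ : ℝ → ℝ) (hφ₁ : IsOrliczPhi φ₁) (hφ₂ : IsOrliczPhi φ₂)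
    (K L : Set (Euc n)) (hK : IsConvexBody K) (hL : IsConvexBody L) :
    ∃ d l : ℝ, HasDerivWithinAt φ₁ d (Set.Ici 1) 1 ∧
      Tendsto
        (fun ε => (orliczCombWidthIntegral n i φ₁ φ₂ ε K L - widthIntegral n i K) / ε)
        (nhdsWithin 0 (Set.Ioi 0)) (nhds l) ∧
      orliczMixedWidthIntegral n i φ₂ K L = d / ((n : ℝ) - i) * l := by
  obtain ⟨d, hd, hDeriv, hslope⟩ := hφ₁.exists_rightDeriv
  obtain ⟨rK, RK, hrK, hRK, hKb⟩ := hK.halfWidth_bounds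
  obtain ⟨rL, RL, hrL, hRL, hLb⟩ := hL.halfWidth_bounds
  haveI : IsFiniteMeasure (sphMeasure n) := by unfold sphMeasure; infer_instance
  set q : ℝ := (n : ℝ) - i with hqdef
  have hq1 : 1 ≤ q := by
    have h : (i : ℝ) + 1 ≤ (n : ℝ) := by exact_mod_cast hi
    rw [hqdef]; linarith
  have hq0 : (0:ℝ) < q := by linarith
  have hnorm : ∀ u : sphere (0 : Euc n) 1, ‖(u : Euc n)‖ = 1 :=
    fun u => norm_eq_of_mem_sphere u
  have hApos : ∀ u : sphere (0 : Euc n) 1, 0 < halfWidth K (u : Euc n) :=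
    fun u => lt_of_lt_of_le hrK (hKb _ (hnorm u)).1
  have hAle : ∀ u : sphere (0 : Euc n) 1, halfWidth K (u : Euc n) ≤ RK :=
    fun u => (hKb _ (hnorm u)).2
  have hBpos : ∀ u : sphere (0 : Euc n) 1, 0 < halfWidth L (u : Euc n) :=
    fun u => lt_of_lt_of_le hrL (hLb _ (hnorm u)).1
  have hBle : ∀ u : sphere (0 : Euc n) 1, halfWidth L (u : Euc n) ≤ RL :=
    fun u => (hLb _ (hnorm u)).2
  have hc : 0 < 1 - φ₁ 2 := by linarith [hφ₁.phi_two_lt_one]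
  set c : ℝ := 1 - φ₁ 2 with hcdef
  set ρ : ℝ := rL / RK with hρdef
  have hρ : 0 < ρ := div_pos hrL hRK
  have hφρ : 0 < φ₂ ρ := hφ₂.pos _ hρ
  have hρle : ∀ u : sphere (0 : Euc n) 1,
      ρ ≤ halfWidth L (u : Euc n) / halfWidth K (u : Euc n) := by
    intro u
    rw [hρdef, div_le_div_iff₀ hRK (hApos u)]
    nlinarith [(hLb _ (hnorm u)).1, hAle u, hApos u, hrL.le]
  have hφBA : ∀ u : sphere (0 : Euc n) 1,
      φ₂ (halfWidth L (u : Euc n) / halfWidth K (u : Euc n)) ≤ φ₂ ρ := by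
    intro u
    exact hφ₂.strictAntiOn.antitoneOn (mem_Ioi.mpr hρ)
      (mem_Ioi.mpr (div_pos (hBpos u) (hApos u))) (hρle u)
  set ε₀ : ℝ := c / φ₂ ρ with hε₀def
  have hε₀ : 0 < ε₀ := div_pos hc hφρ
  -- the family of difference quotients and its limit
  set f : ℝ → sphere (0 : Euc n) 1 → ℝ := fun ε u =>
    ((orliczComb φ₁ φ₂ ε (halfWidth K (u : Euc n)) (halfWidth L (u : Euc n))) ^ q -
      halfWidth K (u : Euc n) ^ q) / ε with hfdef
  set g : sphere (0 : Euc n) 1 → ℝ := fun u =>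
    q * halfWidth K (u : Euc n) ^ q *
      φ₂ (halfWidth L (u : Euc n) / halfWidth K (u : Euc n)) / d with hgdef
  set C : ℝ := q * RK ^ (q - 1) * RK * φ₂ ρ / c with hCdef
  -- measurability of f ε
  have hcA : Continuous (fun u : sphere (0 : Euc n) 1 => halfWidth K (u : Euc n)) :=
    (halfWidth_continuous hK).comp continuous_subtype_val
  have hcArpow : Continuous (fun u : sphere (0 : Euc n) 1 => halfWidth K (u : Euc n) ^ q) :=
    (Real.continuous_rpow_const (by linarith)).comp hcA
  have hfmeas : ∀ ε : ℝ, 0 < ε → Measurable (f ε) := by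
    intro ε hε
    have h1 := measurable_orliczComb_sphere hφ₁ hφ₂ hK hL hApos hBpos hε
    have h2 : Measurable (fun u : sphere (0 : Euc n) 1 =>
        (orliczComb φ₁ φ₂ ε (halfWidth K (u : Euc n)) (halfWidth L (u : Euc n))) ^ q) :=
      (Real.continuous_rpow_const (by linarith)).measurable.comp h1
    exact (h2.sub hcArpow.measurable).div_const ε
  -- uniform bound
  have hbound : ∀ ε : ℝ, ε ∈ Set.Ioo 0 ε₀ → ∀ u : sphere (0 : Euc n) 1, ‖f ε u‖ ≤ C := by
    intro ε hε u
    have hεpos := hε.1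
    have ha := hApos u
    have hb := hBpos u
    have hsmall : ε * φ₂ (halfWidth L (u : Euc n) / halfWidth K (u : Euc n)) < c := by
      have h1 : ε * φ₂ ρ < c := by
        have := hε.2
        rw [hε₀def, lt_div_iff₀ hφρ] at this
        exact this
      nlinarith [hφBA u, hφρ, hεpos]
    obtain ⟨hl0, hlA, _⟩ := orliczComb_spec hφ₁ hφ₂ ha hb hεpos
    set lam := orliczComb φ₁ φ₂ ε (halfWidth K (u : Euc n)) (halfWidth L (u : Euc n))
    have hdist := orliczComb_dist_le hφ₁ hφ₂ ha hb hεpos hsmall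
    have hrle : lam ^ q ≤ halfWidth K (u : Euc n) ^ q :=
      Real.rpow_le_rpow hl0.le hlA.le (by linarith)
    have hnorm_eq : ‖f ε u‖ = (halfWidth K (u : Euc n) ^ q - lam ^ q) / ε := by
      rw [hfdef]
      dsimp only
      rw [Real.norm_eq_abs, abs_div, abs_of_pos hεpos, abs_of_nonpos (by linarith), neg_sub]
    rw [hnorm_eq]
    have hsub : halfWidth K (u : Euc n) ^ q - lam ^ q ≤
        q * RK ^ (q - 1) * (halfWidth K (u : Euc n) - lam) :=
      rpow_sub_rpow_le hq1 hl0 hlA.le (hAle u)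
    have hdist2 : halfWidth K (u : Euc n) - lam ≤ RK * (ε * φ₂ ρ) / c := by
      have hmul : halfWidth K (u : Euc n) *
          (ε * φ₂ (halfWidth L (u : Euc n) / halfWidth K (u : Euc n))) ≤
          RK * (ε * φ₂ ρ) := by
        have h1 := hφBA u
        have h2 := hAle u
        have hφnn : 0 ≤ φ₂ (halfWidth L (u : Euc n) / halfWidth K (u : Euc n)) :=
          (hφ₂.pos _ (div_pos hb ha)).le
        exact mul_le_mul h2 (mul_le_mul_of_nonneg_left h1 hεpos.le)
          (by positivity) hRK.le
      calc halfWidth K (u : Euc n) - lam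
          ≤ halfWidth K (u : Euc n) *
            (ε * φ₂ (halfWidth L (u : Euc n) / halfWidth K (u : Euc n))) / c := hdist
        _ ≤ RK * (ε * φ₂ ρ) / c := by gcongr
    have hRKpow : 0 ≤ q * RK ^ (q - 1) := by positivity
    rw [div_le_iff₀ hεpos]
    calc halfWidth K (u : Euc n) ^ q - lam ^ q
        ≤ q * RK ^ (q - 1) * (halfWidth K (u : Euc n) - lam) := hsub
      _ ≤ q * RK ^ (q - 1) * (RK * (ε * φ₂ ρ) / c) := mul_le_mul_of_nonneg_left hdist2 hRKpow
      _ = C * ε := by rw [hCdef]; field_simp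
  -- pointwise limit
  have hlim : ∀ u : sphere (0 : Euc n) 1,
      Tendsto (fun ε => f ε u) (nhdsWithin 0 (Set.Ioi 0)) (nhds (g u)) := by
    intro u
    exact orliczComb_pow_tendsto hφ₁ hφ₂ hd hslope (hApos u) (hBpos u) hq1
  -- dominated convergence
  have hDCT : Tendsto (fun ε => ∫ u : sphere (0 : Euc n) 1, f ε u ∂(sphMeasure n))
      (nhdsWithin 0 (Set.Ioi 0))
      (nhds (∫ u : sphere (0 : Euc n) 1, g u ∂(sphMeasure n))) := by
    apply tendsto_integral_filter_of_dominated_convergence (fun _ => C)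
    · filter_upwards [eventually_mem_nhdsWithin] with ε hε
      exact (hfmeas ε hε).aestronglyMeasurable
    · filter_upwards [Ioo_mem_nhdsGT_of_mem ⟨le_refl (0:ℝ), hε₀⟩] with ε hε
      exact Filter.Eventually.of_forall (hbound ε hε)
    · exact integrable_const C
    · exact Filter.Eventually.of_forall hlim
  -- integrability for the integral identity
  have hIntA : Integrable (fun u : sphere (0 : Euc n) 1 => halfWidth K (u : Euc n) ^ q)
      (sphMeasure n) := by
    apply (integrable_const (RK ^ q)).mono' hcArpow.measurable.aestronglyMeasurable
    refine Filter.Eventually.of_forall fun u => ?_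
    rw [Real.norm_eq_abs, abs_of_nonneg (Real.rpow_nonneg (hApos u).le q)]
    exact Real.rpow_le_rpow (hApos u).le (hAle u) (by linarith)
  have hIntLam : ∀ ε : ℝ, 0 < ε → Integrable (fun u : sphere (0 : Euc n) 1 =>
      (orliczComb φ₁ φ₂ ε (halfWidth K (u : Euc n)) (halfWidth L (u : Euc n))) ^ q)
      (sphMeasure n) := by
    intro ε hε
    have h1 := measurable_orliczComb_sphere hφ₁ hφ₂ hK hL hApos hBpos hε
    have h2 : Measurable (fun u : sphere (0 : Euc n) 1 =>
        (orliczComb φ₁ φ₂ ε (halfWidth K (u : Euc n)) (halfWidth L (u : Euc n))) ^ q) :=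
      (Real.continuous_rpow_const (by linarith)).measurable.comp h1
    apply (integrable_const (RK ^ q)).mono' h2.aestronglyMeasurable
    refine Filter.Eventually.of_forall fun u => ?_
    obtain ⟨hl0, hlA, _⟩ := orliczComb_spec hφ₁ hφ₂ (hApos u) (hBpos u) hε
    rw [Real.norm_eq_abs, abs_of_nonneg (Real.rpow_nonneg hl0.le q)]
    exact Real.rpow_le_rpow hl0.le (hlA.le.trans (hAle u)) (by linarith)
  -- the identity between difference quotients of integrals and ∫ f ε
  have hident : ∀ ε : ℝ, 0 < ε →
      (orliczCombWidthIntegral n i φ₁ φ₂ ε K L - widthIntegral n i K) / ε =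
        (1 / (n : ℝ)) * ∫ u : sphere (0 : Euc n) 1, f ε u ∂(sphMeasure n) := by
    intro ε hε
    rw [orliczCombWidthIntegral, widthIntegral]
    rw [← mul_sub, ← integral_sub (hIntLam ε hε) hIntA]
    rw [mul_div_assoc, ← integral_div]
  -- the limit value
  set l : ℝ := (1 / (n : ℝ)) * ∫ u : sphere (0 : Euc n) 1, g u ∂(sphMeasure n) with hldef
  refine ⟨d, l, hDeriv, ?_, ?_⟩
  · have hT := hDCT.const_mul (1 / (n : ℝ))
    apply hT.congr'
    filter_upwards [eventually_mem_nhdsWithin] with ε hε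
    exact (hident ε hε).symm
  · -- final identity
    have hgeq : ∀ u : sphere (0 : Euc n) 1, g u = (q / d) *
        (φ₂ (halfWidth L (u : Euc n) / halfWidth K (u : Euc n)) *
          halfWidth K (u : Euc n) ^ q) := by
      intro u
      rw [hgdef]
      ring
    have hint : ∫ u : sphere (0 : Euc n) 1, g u ∂(sphMeasure n) =
        (q / d) * ∫ u : sphere (0 : Euc n) 1,
          φ₂ (halfWidth L (u : Euc n) / halfWidth K (u : Euc n)) *
            halfWidth K (u : Euc n) ^ q ∂(sphMeasure n) := by
      simp_rw [hgeq]
      exact integral_const_mul _ _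
    rw [orliczMixedWidthIntegral, hldef, hint]
    have hdne : d ≠ 0 := hd.ne
    have hqne : q ≠ 0 := hq0.ne'
    field_simp
    ring

end
end
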